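/- arXiv:2407.20110 — 4 statements merged into one kernel-verified Lean document; each statement's English description precedes it below -/
import Mathlib

section
/- Let G be a finite nilpotent group whose reduced power graph P*(G) is claw-free. Then either G is a p-group for some prime p, or G is cyclic of order p^n·q where p and q are distinct primes and n is a positive integer. -/
/-- Adjacency in the power graph: the two elements are distinct and one of the
two cyclic subgroups they generate is contained in the other. -/
def PowAdj {G : Type*} [Group G] (a b : G) : Prop :=
  a ≠ b ∧ (a ∈ Subgroup.zpowers b ∨ b ∈ Subgroup.zpowers a)

/-- The reduced power graph `P*(G)`: the induced subgraph of the power graph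
on the non-identity elements of `G`. -/
def reducedPowerGraph (G : Type*) [Group G] : SimpleGraph {g : G // g ≠ 1} where
  Adj a b := PowAdj (a : G) (b : G)
  symm := by
    constructor
    intro a b h
    exact ⟨h.1.symm, h.2.symm⟩
  loopless := by
    constructor
    intro a h
    exact h.1 rfl

/-- A graph is claw-free if it has no vertex with three pairwise distinct,
pairwise non-adjacent neighbours. -/
def IsClawFree {V : Type*} (Γ : SimpleGraph V) : Prop :=
  ¬ ∃ b a₁ a₂ a₃ : V, a₁ ≠ a₂ ∧ a₁ ≠ a₃ ∧ a₂ ≠ a₃ ∧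
      Γ.Adj b a₁ ∧ Γ.Adj b a₂ ∧ Γ.Adj b a₃ ∧
      ¬ Γ.Adj a₁ a₂ ∧ ¬ Γ.Adj a₁ a₃ ∧ ¬ Γ.Adj a₂ a₃

open Subgroup

section Helpers

variable {G : Type*} [Group G]

/-- If `a` and `b` commute and have coprime orders, `a` is a power of `a*b`. -/
lemma mem_zpowers_mul_of_coprime {a b : G} (h : Commute a b)
    (hco : Nat.Coprime (orderOf a) (orderOf b)) : a ∈ Subgroup.zpowers (a * b) := by
  obtain ⟨m, hm⟩ := exists_pow_eq_self_of_coprime (x := a) hco.symm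
  refine ⟨((orderOf b * m : ℕ) : ℤ), ?_⟩
  show (a * b) ^ ((orderOf b * m : ℕ) : ℤ) = a
  rw [zpow_natCast, pow_mul, h.mul_pow, pow_orderOf_eq_one, mul_one, hm]

lemma claw_helper (hcf : IsClawFree (reducedPowerGraph G))
    {b a1 a2 a3 : G} (hb : b ≠ 1) (h1 : a1 ≠ 1) (h2 : a2 ≠ 1) (h3 : a3 ≠ 1)
    (hb1 : b ≠ a1) (hb2 : b ≠ a2) (hb3 : b ≠ a3)
    (m1 : b ∈ zpowers a1 ∨ a1 ∈ zpowers b)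
    (m2 : b ∈ zpowers a2 ∨ a2 ∈ zpowers b)
    (m3 : b ∈ zpowers a3 ∨ a3 ∈ zpowers b)
    (n12 : ¬ (a1 ∈ zpowers a2 ∨ a2 ∈ zpowers a1))
    (n13 : ¬ (a1 ∈ zpowers a3 ∨ a3 ∈ zpowers a1))
    (n23 : ¬ (a2 ∈ zpowers a3 ∨ a3 ∈ zpowers a2)) : False := by
  have d12 : a1 ≠ a2 := fun h => n12 (Or.inl (h ▸ mem_zpowers a2))
  have d13 : a1 ≠ a3 := fun h => n13 (Or.inl (h ▸ mem_zpowers a3))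
  have d23 : a2 ≠ a3 := fun h => n23 (Or.inl (h ▸ mem_zpowers a3))
  exact hcf ⟨⟨b, hb⟩, ⟨a1, h1⟩, ⟨a2, h2⟩, ⟨a3, h3⟩,
    fun h => d12 (congrArg Subtype.val h),
    fun h => d13 (congrArg Subtype.val h),
    fun h => d23 (congrArg Subtype.val h),
    ⟨hb1, m1⟩, ⟨hb2, m2⟩, ⟨hb3, m3⟩,
    fun h => n12 h.2, fun h => n13 h.2, fun h => n23 h.2⟩

/-- For each `g` in a finite group there is a maximal cyclic subgroup containing it. -/
lemma exists_maximal_zpowers [Finite G] (g : G) :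
    ∃ x : G, g ∈ zpowers x ∧ ∀ y : G, x ∈ zpowers y → zpowers y = zpowers x := by
  classical
  have _inst := Fintype.ofFinite G
  obtain ⟨x, hx, hmax⟩ := Finset.exists_max_image
    (Finset.univ.filter fun x : G => g ∈ zpowers x) orderOf
    ⟨g, by simp [mem_zpowers]⟩
  simp only [Finset.mem_filter, Finset.mem_univ, true_and] at hx
  refine ⟨x, hx, fun y hxy => ?_⟩
  have hle : zpowers x ≤ zpowers y := zpowers_le.mpr hxy
  have hy : g ∈ zpowers y := hle hx
  have hcard : Nat.card (zpowers y) ≤ Nat.card (zpowers x) := by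
    rw [Nat.card_zpowers, Nat.card_zpowers]
    exact hmax y (by simp [hy])
  exact (Subgroup.eq_of_le_of_card_ge hle hcard).symm

/-- A finite non-cyclic group contains three nontrivial elements whose cyclic
subgroups are pairwise incomparable. -/
lemma exists_antichain [Finite G] (h : ¬ IsCyclic G) :
    ∃ a b c : G, a ≠ 1 ∧ b ≠ 1 ∧ c ≠ 1 ∧
      ¬ (a ∈ zpowers b ∨ b ∈ zpowers a) ∧
      ¬ (a ∈ zpowers c ∨ c ∈ zpowers a) ∧
      ¬ (b ∈ zpowers c ∨ c ∈ zpowers b) := by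
  obtain ⟨a, -, ha⟩ := exists_maximal_zpowers (1 : G)
  have hnotall : ¬ ∀ x : G, x ∈ zpowers a := fun hx => h ⟨⟨a, hx⟩⟩
  push_neg at hnotall
  obtain ⟨u, hu⟩ := hnotall
  obtain ⟨b, hub, hb⟩ := exists_maximal_zpowers u
  have hba : b ∉ zpowers a := fun hmem => hu (zpowers_le.mpr hmem hub)
  have hab : a ∉ zpowers b := fun hmem => hu ((ha b hmem) ▸ hub)
  set w := a * b with hw
  have hwa : w ∉ zpowers a := fun hmem => hba (by
    have : b = a⁻¹ * w := by rw [hw]; group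
    rw [this]; exact mul_mem (inv_mem (mem_zpowers a)) hmem)
  have hwb : w ∉ zpowers b := fun hmem => hab (by
    have : a = w * b⁻¹ := by rw [hw]; group
    rw [this]; exact mul_mem hmem (inv_mem (mem_zpowers b)))
  obtain ⟨c, hwc, hc⟩ := exists_maximal_zpowers w
  have hca : c ∉ zpowers a := fun hmem => hwa (zpowers_le.mpr hmem hwc)
  have hac : a ∉ zpowers c := fun hmem => hwa ((ha c hmem) ▸ hwc)
  have hcb : c ∉ zpowers b := fun hmem => hwb (zpowers_le.mpr hmem hwc)
  have hbc : b ∉ zpowers c := fun hmem => hwb ((hb c hmem) ▸ hwc)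
  have ha1 : a ≠ 1 := by
    rintro rfl
    exact hu ((ha u (one_mem _)) ▸ mem_zpowers u)
  have hb1 : b ≠ 1 := by
    rintro rfl
    obtain ⟨k, hk⟩ := hub
    simp only [one_zpow] at hk
    exact hu (hk ▸ one_mem _)
  have hc1 : c ≠ 1 := by
    rintro rfl
    obtain ⟨k, hk⟩ := hwc
    simp only [one_zpow] at hk
    exact hwa (hk ▸ one_mem _)
  exact ⟨a, b, c, ha1, hb1, hc1,
    fun h' => h'.elim hab hba,
    fun h' => h'.elim hac hca,
    fun h' => h'.elim hbc hcb⟩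

end Helpers

section Main

variable {G : Type*} [Group G] [Finite G]

lemma commute_of_distinct_prime_pow (hnil : Group.IsNilpotent G)
    {p q : ℕ} (hp : p.Prime) (hq : q.Prime) (hpq : p ≠ q)
    {P Q : Subgroup G} (hP : IsPGroup p P) (hQ : IsPGroup q Q)
    (hPn : P.Normal) (hQn : Q.Normal)
    {x y : G} (hx : x ∈ P) (hy : y ∈ Q) : Commute x y := by
  haveI := Fact.mk hp; haveI := Fact.mk hq
  exact Subgroup.commute_of_normal_of_disjoint _ _ hPn hQn
    (IsPGroup.disjoint_of_ne p q hpq _ _ hP hQ) x y hx hy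

lemma commute_of_distinct_prime_orders (hnil : Group.IsNilpotent G)
    {p q : ℕ} (hp : p.Prime) (hq : q.Prime) (hpq : p ≠ q)
    {x y : G} (hx : orderOf x = p) (hy : orderOf y = q) : Commute x y := by
  haveI := Fact.mk hp; haveI := Fact.mk hq; haveI := hnil
  have hzx : IsPGroup p (Subgroup.zpowers x) := IsPGroup.of_card
    (show Nat.card (Subgroup.zpowers x) = p ^ 1 by rw [Nat.card_zpowers, hx, pow_one])
  have hzy : IsPGroup q (Subgroup.zpowers y) := IsPGroup.of_card
    (show Nat.card (Subgroup.zpowers y) = q ^ 1 by rw [Nat.card_zpowers, hy, pow_one])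
  obtain ⟨P, hxP⟩ := hzx.exists_le_sylow
  obtain ⟨Q, hyQ⟩ := hzy.exists_le_sylow
  have hPn := Sylow.normal_of_normalizerCondition normalizerCondition_of_isNilpotent P
  have hQn := Sylow.normal_of_normalizerCondition normalizerCondition_of_isNilpotent Q
  exact commute_of_distinct_prime_pow hnil hp hq hpq P.isPGroup' Q.isPGroup' hPn hQn
    (hxP (mem_zpowers x)) (hyQ (mem_zpowers y))

lemma nonadj_of_distinct_prime_orders {x y : G} {p q : ℕ}
    (hp : p.Prime) (hq : q.Prime) (hpq : p ≠ q)
    (hx : orderOf x = p) (hy : orderOf y = q) :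
    ¬ (x ∈ zpowers y ∨ y ∈ zpowers x) := by
  rintro (h | h)
  · have := orderOf_dvd_of_mem_zpowers h
    rw [hx, hy] at this
    exact hpq ((Nat.prime_dvd_prime_iff_eq hp hq).mp this)
  · have := orderOf_dvd_of_mem_zpowers h
    rw [hx, hy] at this
    exact hpq (((Nat.prime_dvd_prime_iff_eq hq hp).mp this).symm)

/-- Three distinct primes dividing the order of a nilpotent group give a claw. -/
lemma no_three_primes (hnil : Group.IsNilpotent G)
    (hcf : IsClawFree (reducedPowerGraph G))
    {p q r : ℕ} (hp : p.Prime) (hq : q.Prime) (hr : r.Prime)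
    (hpq : p ≠ q) (hpr : p ≠ r) (hqr : q ≠ r)
    {x y z : G} (hx : orderOf x = p) (hy : orderOf y = q) (hz : orderOf z = r) : False := by
  have cxy := commute_of_distinct_prime_orders hnil hp hq hpq hx hy
  have cxz := commute_of_distinct_prime_orders hnil hp hr hpr hx hz
  have cyz := commute_of_distinct_prime_orders hnil hq hr hqr hy hz
  have copq : Nat.Coprime p q := (Nat.coprime_primes hp hq).mpr hpq
  have copr : Nat.Coprime p r := (Nat.coprime_primes hp hr).mpr hpr
  have coqr : Nat.Coprime q r := (Nat.coprime_primes hq hr).mpr hqr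
  have ordyz : orderOf (y * z) = q * r := by
    rw [cyz.orderOf_mul_eq_mul_orderOf_of_coprime (by rw [hy, hz]; exact coqr), hy, hz]
  have ordxz : orderOf (x * z) = p * r := by
    rw [cxz.orderOf_mul_eq_mul_orderOf_of_coprime (by rw [hx, hz]; exact copr), hx, hz]
  have ordxy : orderOf (x * y) = p * q := by
    rw [cxy.orderOf_mul_eq_mul_orderOf_of_coprime (by rw [hx, hy]; exact copq), hx, hy]
  set t := x * (y * z) with ht
  have cx_yz : Commute x (y * z) := cxy.mul_right cxz
  have co_x_yz : Nat.Coprime (orderOf x) (orderOf (y * z)) := by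
    rw [hx, ordyz]; exact Nat.Coprime.mul_right copq copr
  have ordt : orderOf t = p * (q * r) := by
    rw [ht, cx_yz.orderOf_mul_eq_mul_orderOf_of_coprime co_x_yz, hx, ordyz]
  have hxt : x ∈ zpowers t := mem_zpowers_mul_of_coprime cx_yz co_x_yz
  have hyt : y ∈ zpowers t := by
    have e : t = y * (x * z) := by
      rw [ht, ← mul_assoc, ← mul_assoc, cxy.eq]
    rw [e]
    exact mem_zpowers_mul_of_coprime (cxy.symm.mul_right cyz)
      (by rw [hy, ordxz]; exact Nat.Coprime.mul_right copq.symm coqr)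
  have hzt : z ∈ zpowers t := by
    have e : t = z * (x * y) := by
      rw [ht, ← mul_assoc, (Commute.mul_left cxz cyz).eq]
    rw [e]
    exact mem_zpowers_mul_of_coprime (Commute.mul_left cxz cyz).symm
      (by rw [hz, ordxy]; exact Nat.Coprime.mul_right copr.symm coqr.symm)
  have hp2 := hp.two_le
  have hq2 := hq.two_le
  have hr2 := hr.two_le
  have hx1 : x ≠ 1 := by
    intro h; rw [h, orderOf_one] at hx; exact hp.ne_one hx.symm
  have hy1 : y ≠ 1 := by
    intro h; rw [h, orderOf_one] at hy; exact hq.ne_one hy.symm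
  have hz1 : z ≠ 1 := by
    intro h; rw [h, orderOf_one] at hz; exact hr.ne_one hz.symm
  have ht1 : t ≠ 1 := by
    intro h; rw [h, orderOf_one] at ordt; nlinarith
  have htx : t ≠ x := by
    intro h
    have h' := congrArg orderOf h
    rw [ordt, hx] at h'; nlinarith
  have hty : t ≠ y := by
    intro h
    have h' := congrArg orderOf h
    rw [ordt, hy] at h'; nlinarith
  have htz : t ≠ z := by
    intro h
    have h' := congrArg orderOf h
    rw [ordt, hz] at h'; nlinarith
  exact claw_helper hcf ht1 hx1 hy1 hz1 htx hty htz
    (Or.inr hxt) (Or.inr hyt) (Or.inr hzt)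
    (nonadj_of_distinct_prime_orders hp hq hpq hx hy)
    (nonadj_of_distinct_prime_orders hp hr hpr hx hz)
    (nonadj_of_distinct_prime_orders hq hr hqr hy hz)

/-- If the reduced power graph is claw-free, every normal `p`-subgroup is cyclic,
provided there is an element of prime order `q ≠ p`. -/
lemma sylow_isCyclic (hnil : Group.IsNilpotent G)
    (hcf : IsClawFree (reducedPowerGraph G))
    {p q : ℕ} (hp : p.Prime) (hq : q.Prime) (hpq : p ≠ q)
    {P : Subgroup G} (hP : IsPGroup p P) (hPn : P.Normal)
    {b : G} (hbord : orderOf b = q) : IsCyclic P := by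
  haveI := Fact.mk hp; haveI := Fact.mk hq; haveI := hnil
  by_contra hncyc
  obtain ⟨a1, a2, a3, h1, h2, h3, n12, n13, n23⟩ := exists_antichain hncyc
  have hzb : IsPGroup q (Subgroup.zpowers b) := IsPGroup.of_card
    (show Nat.card (Subgroup.zpowers b) = q ^ 1 by rw [Nat.card_zpowers, hbord, pow_one])
  obtain ⟨Q, hbQ'⟩ := hzb.exists_le_sylow
  have hQn := Sylow.normal_of_normalizerCondition normalizerCondition_of_isNilpotent Q
  have hbQ : b ∈ (Q : Subgroup G) := hbQ' (mem_zpowers b)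
  have hdisj : Disjoint P (Q : Subgroup G) :=
    IsPGroup.disjoint_of_ne p q hpq _ _ hP Q.isPGroup'
  have hcomm : ∀ x : P, Commute (x : G) b := fun x =>
    Subgroup.commute_of_normal_of_disjoint _ _ hPn hQn hdisj x b x.2 hbQ
  have hb1 : b ≠ 1 := by
    intro h; rw [h, orderOf_one] at hbord; exact hq.ne_one hbord.symm
  -- coprimality of orders
  have hco : ∀ x : P, Nat.Coprime (orderOf b) (orderOf (x : G)) := by
    intro x
    have hxord : orderOf (x : G) = orderOf x := by
      have := orderOf_injective P.subtype P.subtype_injective x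
      simpa using this
    obtain ⟨k, hk⟩ := hP x
    have hdvd : orderOf (x : G) ∣ p ^ k := by
      rw [hxord]
      exact orderOf_dvd_of_pow_eq_one hk
    rw [hbord]
    exact Nat.Coprime.coprime_dvd_right hdvd
      (((Nat.coprime_primes hq hp).mpr hpq.symm).pow_right k)
  -- coerced elements are nontrivial
  have coe_ne_one : ∀ {x : P}, x ≠ 1 → (x : G) ≠ 1 := by
    intro x hx h
    exact hx (by exact_mod_cast h)
  -- lift zpowers memberships from G to P
  have lift : ∀ x y : P, (x : G) ∈ zpowers (y : G) → x ∈ zpowers y := by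
    intro x y hm
    obtain ⟨k, hk⟩ := mem_zpowers_iff.mp hm
    exact mem_zpowers_iff.mpr ⟨k, Subtype.ext (by rw [SubgroupClass.coe_zpow]; exact hk)⟩
  have liftn : ∀ x y : P, ¬ (x ∈ zpowers y ∨ y ∈ zpowers x) →
      ¬ ((x : G) ∈ zpowers (y : G) ∨ (y : G) ∈ zpowers (x : G)) := by
    intro x y hn h
    exact hn (h.elim (fun h' => Or.inl (lift _ _ h')) (fun h' => Or.inr (lift _ _ h')))
  -- leaves are nontrivial
  have leaf_ne_one : ∀ x : P, x ≠ 1 → (x : G) * b ≠ 1 := by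
    intro x hx h
    have hxQ : (x : G) ∈ (Q : Subgroup G) := by
      have : (x : G) = b⁻¹ := eq_inv_of_mul_eq_one_left h
      rw [this]; exact inv_mem hbQ
    exact coe_ne_one hx (Subgroup.disjoint_def.mp hdisj x.2 hxQ)
  -- center is a power of each leaf
  have center_mem : ∀ x : P, b ∈ zpowers ((x : G) * b) := by
    intro x
    have := mem_zpowers_mul_of_coprime (hcomm x).symm (hco x)
    rwa [(hcomm x).symm.eq] at this
  -- non-adjacency between the leaves
  have key : ∀ x y : P, ¬ ((x : G) ∈ zpowers (y : G)) →
      (x : G) * b ∉ zpowers ((y : G) * b) := by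
    intro x y hxy hmem
    obtain ⟨k, hk⟩ := mem_zpowers_iff.mp hmem
    have e : (y : G) ^ k * b ^ k = (x : G) * b := by
      rw [← (hcomm y).mul_zpow]; exact hk
    have e1 : (y : G) ^ k = (x : G) * b * (b ^ k)⁻¹ := by rw [← e]; group
    have e2 : (x : G)⁻¹ * (y : G) ^ k = b * (b ^ k)⁻¹ := by rw [e1]; group
    have tP : (x : G)⁻¹ * (y : G) ^ k ∈ P := mul_mem (inv_mem x.2) (zpow_mem y.2 k)
    have tQ : (x : G)⁻¹ * (y : G) ^ k ∈ (Q : Subgroup G) := by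
      rw [e2]; exact mul_mem hbQ (inv_mem (zpow_mem hbQ k))
    have t1 : (x : G)⁻¹ * (y : G) ^ k = 1 := Subgroup.disjoint_def.mp hdisj tP tQ
    exact hxy (mem_zpowers_iff.mpr ⟨k, (inv_mul_eq_one.mp t1).symm⟩)
  have nonadj : ∀ x y : P, ¬ (x ∈ zpowers y ∨ y ∈ zpowers x) →
      ¬ ((x : G) * b ∈ zpowers ((y : G) * b) ∨ (y : G) * b ∈ zpowers ((x : G) * b)) := by
    intro x y hn h
    have hn' := liftn x y hn
    exact h.elim (key x y (fun hm => hn' (Or.inl hm)))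
      (key y x (fun hm => hn' (Or.inr hm)))
  -- center differs from the leaves
  have center_ne : ∀ x : P, x ≠ 1 → b ≠ (x : G) * b := by
    intro x hx h
    have e : (1 : G) * b = (x : G) * b := by rw [one_mul, ← h]
    exact coe_ne_one hx (mul_right_cancel e).symm
  exact claw_helper hcf hb1 (leaf_ne_one a1 h1) (leaf_ne_one a2 h2) (leaf_ne_one a3 h3)
    (center_ne a1 h1) (center_ne a2 h2) (center_ne a3 h3)
    (Or.inl (center_mem a1)) (Or.inl (center_mem a2)) (Or.inl (center_mem a3))
    (nonadj a1 a2 n12) (nonadj a1 a3 n13) (nonadj a2 a3 n23)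

/-- Two commuting elements of orders `p^a`, `q^b` with `a b ≥ 2` give a claw. -/
lemma clawC (hcf : IsClawFree (reducedPowerGraph G))
    {p q a b : ℕ} (hp : p.Prime) (hq : q.Prime) (hpq : p ≠ q)
    (ha : 2 ≤ a) (hb : 2 ≤ b) {u v : G} (hcomm : Commute u v)
    (hu : orderOf u = p ^ a) (hv : orderOf v = q ^ b) : False := by
  have hcopq : Nat.Coprime p q := (Nat.coprime_primes hp hq).mpr hpq
  have hp2 := hp.two_le
  have hq2 := hq.two_le
  have hco : Nat.Coprime (orderOf u) (orderOf v) := by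
    rw [hu, hv]; exact Nat.Coprime.pow a b hcopq
  set s := u ^ p ^ (a - 1) with hs
  set t := v ^ q ^ (b - 1) with hts
  have hsord : orderOf s = p := by
    rw [hs, orderOf_pow, hu, Nat.gcd_eq_right (pow_dvd_pow p (by omega)),
      Nat.pow_div (by omega) (by omega), show a - (a - 1) = 1 by omega, pow_one]
  have htord : orderOf t = q := by
    rw [hts, orderOf_pow, hv, Nat.gcd_eq_right (pow_dvd_pow q (by omega)),
      Nat.pow_div (by omega) (by omega), show b - (b - 1) = 1 by omega, pow_one]
  have hst : Commute s t := (hcomm.pow_pow _ _)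
  have hword : orderOf (s * t) = p * q := by
    rw [hst.orderOf_mul_eq_mul_orderOf_of_coprime (by rw [hsord, htord]; exact hcopq),
      hsord, htord]
  have hxord : orderOf (u * v) = p ^ a * q ^ b := by
    rw [hcomm.orderOf_mul_eq_mul_orderOf_of_coprime hco, hu, hv]
  have hu_mem : u ∈ zpowers (u * v) := mem_zpowers_mul_of_coprime hcomm hco
  have hv_mem : v ∈ zpowers (u * v) := by
    rw [hcomm.eq]
    exact mem_zpowers_mul_of_coprime hcomm.symm hco.symm
  have hw_mem : s * t ∈ zpowers (u * v) :=
    mul_mem (pow_mem hu_mem _) (pow_mem hv_mem _)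
  -- numeric facts
  have h1pa : 1 < p ^ a := Nat.one_lt_pow (by omega) (by omega)
  have h1qb : 1 < q ^ b := Nat.one_lt_pow (by omega) (by omega)
  have hppa : p < p ^ a := by
    calc p = p ^ 1 := (pow_one p).symm
    _ < p ^ a := Nat.pow_lt_pow_right (by omega) (by omega)
  have hqqb : q < q ^ b := by
    calc q = q ^ 1 := (pow_one q).symm
    _ < q ^ b := Nat.pow_lt_pow_right (by omega) (by omega)
  have hp2pa : p * p ∣ p ^ a := by
    calc p * p = p ^ 2 := (sq p).symm
    _ ∣ p ^ a := pow_dvd_pow p ha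
  have hq2qb : q * q ∣ q ^ b := by
    calc q * q = q ^ 2 := (sq q).symm
    _ ∣ q ^ b := pow_dvd_pow q hb
  -- dvd contradictions
  have dvd1 : ¬ (p ^ a ∣ q ^ b) := by
    intro h
    have : p ∣ q := hp.dvd_of_dvd_pow (dvd_trans (dvd_pow_self p (by omega)) h)
    exact hpq ((Nat.prime_dvd_prime_iff_eq hp hq).mp this)
  have dvd2 : ¬ (q ^ b ∣ p ^ a) := by
    intro h
    have : q ∣ p := hq.dvd_of_dvd_pow (dvd_trans (dvd_pow_self q (by omega)) h)
    exact hpq.symm ((Nat.prime_dvd_prime_iff_eq hq hp).mp this)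
  have dvd3 : ¬ (p ^ a ∣ p * q) := by
    intro h
    have hpp : p * p ∣ p * q := dvd_trans hp2pa h
    have : p ∣ q := (mul_dvd_mul_iff_left (by positivity : (p : ℕ) ≠ 0)).mp hpp
    exact hpq ((Nat.prime_dvd_prime_iff_eq hp hq).mp this)
  have dvd4 : ¬ (q ^ b ∣ p * q) := by
    intro h
    have hqq : q * q ∣ q * p := dvd_trans hq2qb (by rwa [mul_comm p q] at h)
    have : q ∣ p := (mul_dvd_mul_iff_left (by positivity : (q : ℕ) ≠ 0)).mp hqq
    exact hpq.symm ((Nat.prime_dvd_prime_iff_eq hq hp).mp this)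
  have dvd5 : ¬ (p * q ∣ p ^ a) := by
    intro h
    have : q ∣ p ^ a := dvd_trans (dvd_mul_left q p) h
    have : q ∣ p := hq.dvd_of_dvd_pow this
    exact hpq.symm ((Nat.prime_dvd_prime_iff_eq hq hp).mp this)
  have dvd6 : ¬ (p * q ∣ q ^ b) := by
    intro h
    have : p ∣ q ^ b := dvd_trans (dvd_mul_right p q) h
    have : p ∣ q := hp.dvd_of_dvd_pow this
    exact hpq ((Nat.prime_dvd_prime_iff_eq hp hq).mp this)
  -- inequalities between orders
  have opaqb_pa : p ^ a * q ^ b ≠ p ^ a := by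
    intro h
    have e : p ^ a * q ^ b = p ^ a * 1 := by rw [h, mul_one]
    have := Nat.eq_of_mul_eq_mul_left (by omega) e
    omega
  have opaqb_qb : p ^ a * q ^ b ≠ q ^ b := by
    intro h
    have e : p ^ a * q ^ b = 1 * q ^ b := by rw [h, one_mul]
    have := Nat.eq_of_mul_eq_mul_right (by omega) e
    omega
  have opaqb_pq : p ^ a * q ^ b ≠ p * q := by
    intro h
    exact dvd3 (h ▸ dvd_mul_right (p ^ a) (q ^ b))
  -- nontriviality
  have hu1 : u ≠ 1 := by
    intro h; rw [h, orderOf_one] at hu; omega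
  have hv1 : v ≠ 1 := by
    intro h; rw [h, orderOf_one] at hv; omega
  have hw1 : s * t ≠ 1 := by
    intro h
    rw [h, orderOf_one] at hword
    have : p ∣ 1 := ⟨q, hword⟩
    have := Nat.le_of_dvd one_pos this
    omega
  have hx1 : u * v ≠ 1 := by
    intro h
    rw [h, orderOf_one] at hxord
    have : p ^ a ∣ 1 := ⟨q ^ b, hxord⟩
    have := Nat.le_of_dvd one_pos this
    omega
  have hne : ∀ {y : G} {n : ℕ}, orderOf y = n → p ^ a * q ^ b ≠ n → u * v ≠ y := by
    intro y n hy hn h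
    exact hn (by rw [← hxord, ← hy, h])
  -- nonadjacency among leaves
  have nuv : ¬ (u ∈ zpowers v ∨ v ∈ zpowers u) := by
    rintro (h | h)
    · exact dvd1 (by rw [← hu, ← hv]; exact orderOf_dvd_of_mem_zpowers h)
    · exact dvd2 (by rw [← hu, ← hv]; exact orderOf_dvd_of_mem_zpowers h)
  have nuw : ¬ (u ∈ zpowers (s * t) ∨ s * t ∈ zpowers u) := by
    rintro (h | h)
    · exact dvd3 (by rw [← hu, ← hword]; exact orderOf_dvd_of_mem_zpowers h)
    · exact dvd5 (by rw [← hu, ← hword]; exact orderOf_dvd_of_mem_zpowers h)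
  have nvw : ¬ (v ∈ zpowers (s * t) ∨ s * t ∈ zpowers v) := by
    rintro (h | h)
    · exact dvd4 (by rw [← hv, ← hword]; exact orderOf_dvd_of_mem_zpowers h)
    · exact dvd6 (by rw [← hv, ← hword]; exact orderOf_dvd_of_mem_zpowers h)
  exact claw_helper hcf hx1 hu1 hv1 hw1
    (hne hu opaqb_pa) (hne hv opaqb_qb) (hne hword opaqb_pq)
    (Or.inr hu_mem) (Or.inr hv_mem) (Or.inr hw_mem)
    nuv nuw nvw

end Main

theorem stmt_15 {G : Type*} [Group G] [Finite G] (hnil : Group.IsNilpotent G)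
    (hcf : IsClawFree (reducedPowerGraph G)) :
    (∃ p : ℕ, p.Prime ∧ IsPGroup p G) ∨
      (IsCyclic G ∧ ∃ p q n : ℕ, p.Prime ∧ q.Prime ∧ p ≠ q ∧ 1 ≤ n ∧
        Nat.card G = p ^ n * q) := by
  classical
  by_cases hp1 : ∃ p : ℕ, p.Prime ∧ IsPGroup p G
  · exact Or.inl hp1
  right
  haveI := hnil
  have hN0 : Nat.card G ≠ 0 := Nat.card_pos.ne'
  have key : ∏ r ∈ (Nat.card G).primeFactors, r ^ (Nat.card G).factorization r
      = Nat.card G := by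
    rw [← Nat.support_factorization]
    exact Nat.factorization_prod_pow_eq_self hN0
  have h2 : 1 < (Nat.card G).primeFactors.card := by
    by_contra hle
    push_neg at hle
    apply hp1
    rcases Finset.eq_empty_or_nonempty (Nat.card G).primeFactors with he | ⟨r, hr⟩
    · have h1 : Nat.card G = 1 := by
        rcases Nat.primeFactors_eq_empty.mp he with h | h
        · exact absurd h hN0
        · exact h
      exact ⟨2, Nat.prime_two, IsPGroup.of_card (n := 0) (by rw [h1, pow_zero])⟩
    · have hs : (Nat.card G).primeFactors = {r} := by
        apply Finset.eq_singleton_iff_unique_mem.mpr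
        refine ⟨hr, fun x hx => ?_⟩
        by_contra hne
        have := Finset.one_lt_card.mpr ⟨x, hx, r, hr, hne⟩
        omega
      have hr' : r ^ (Nat.card G).factorization r = Nat.card G := by
        have h' := key
        rw [hs, Finset.prod_singleton] at h'
        exact h'
      exact ⟨r, Nat.prime_of_mem_primeFactors hr, IsPGroup.of_card hr'.symm⟩
  obtain ⟨p, hpS, q, hqS, hpq⟩ := Finset.one_lt_card.mp h2
  have hp : p.Prime := Nat.prime_of_mem_primeFactors hpS
  have hq : q.Prime := Nat.prime_of_mem_primeFactors hqS
  have hcopq : Nat.Coprime p q := (Nat.coprime_primes hp hq).mpr hpq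
  haveI := Fact.mk hp
  haveI := Fact.mk hq
  -- there are at most two prime factors
  have h3 : (Nat.card G).primeFactors.card ≤ 2 := by
    by_contra hgt
    obtain ⟨r1, hr1, r2, hr2, r3, hr3, d12, d13, d23⟩ :=
      (Finset.two_lt_card (s := (Nat.card G).primeFactors)).mp (by omega)
    haveI := Fact.mk (Nat.prime_of_mem_primeFactors hr1)
    haveI := Fact.mk (Nat.prime_of_mem_primeFactors hr2)
    haveI := Fact.mk (Nat.prime_of_mem_primeFactors hr3)
    obtain ⟨x, hx⟩ := exists_prime_orderOf_dvd_card' r1 (Nat.dvd_of_mem_primeFactors hr1)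
    obtain ⟨y, hy⟩ := exists_prime_orderOf_dvd_card' r2 (Nat.dvd_of_mem_primeFactors hr2)
    obtain ⟨z, hz⟩ := exists_prime_orderOf_dvd_card' r3 (Nat.dvd_of_mem_primeFactors hr3)
    exact no_three_primes hnil hcf (Nat.prime_of_mem_primeFactors hr1)
      (Nat.prime_of_mem_primeFactors hr2) (Nat.prime_of_mem_primeFactors hr3)
      d12 d13 d23 hx hy hz
  have hS : (Nat.card G).primeFactors = {p, q} := by
    refine (Finset.eq_of_subset_of_card_le ?_ ?_).symm
    · intro x hx
      rcases Finset.mem_insert.mp hx with h | h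
      · exact h ▸ hpS
      · exact (Finset.mem_singleton.mp h) ▸ hqS
    · rw [Finset.card_pair hpq]
      exact h3
  set aa := (Nat.card G).factorization p with haa_def
  set bb := (Nat.card G).factorization q with hbb_def
  have hNpq : Nat.card G = p ^ aa * q ^ bb := by
    have h' := key
    rw [hS, Finset.prod_pair hpq] at h'
    exact h'.symm
  have haa : 1 ≤ aa :=
    Nat.Prime.factorization_pos_of_dvd hp hN0 (Nat.dvd_of_mem_primeFactors hpS)
  have hbb : 1 ≤ bb :=
    Nat.Prime.factorization_pos_of_dvd hq hN0 (Nat.dvd_of_mem_primeFactors hqS)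
  -- the Sylow subgroups are cyclic
  obtain ⟨P⟩ : Nonempty (Sylow p G) := inferInstance
  obtain ⟨Q⟩ : Nonempty (Sylow q G) := inferInstance
  have hPn := Sylow.normal_of_normalizerCondition normalizerCondition_of_isNilpotent P
  have hQn := Sylow.normal_of_normalizerCondition normalizerCondition_of_isNilpotent Q
  obtain ⟨bq, hbq⟩ := exists_prime_orderOf_dvd_card' q (Nat.dvd_of_mem_primeFactors hqS)
  obtain ⟨bp, hbp⟩ := exists_prime_orderOf_dvd_card' p (Nat.dvd_of_mem_primeFactors hpS)
  have hPcyc : IsCyclic (P : Subgroup G) :=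
    sylow_isCyclic hnil hcf hp hq hpq P.isPGroup' hPn hbq
  have hQcyc : IsCyclic (Q : Subgroup G) :=
    sylow_isCyclic hnil hcf hq hp hpq.symm Q.isPGroup' hQn hbp
  obtain ⟨u, hu⟩ := hPcyc.exists_generator
  obtain ⟨v, hv⟩ := hQcyc.exists_generator
  have huord : orderOf (u : G) = p ^ aa := by
    have e1 := orderOf_injective (P : Subgroup G).subtype (Subgroup.subtype_injective _) u
    have e2 : orderOf u = Nat.card (P : Subgroup G) :=
      orderOf_eq_card_of_forall_mem_zpowers hu
    have e3 : Nat.card (P : Subgroup G) = p ^ aa := P.card_eq_multiplicity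
    rw [← e3, ← e2]
    simpa using e1
  have hvord : orderOf (v : G) = q ^ bb := by
    have e1 := orderOf_injective (Q : Subgroup G).subtype (Subgroup.subtype_injective _) v
    have e2 : orderOf v = Nat.card (Q : Subgroup G) :=
      orderOf_eq_card_of_forall_mem_zpowers hv
    have e3 : Nat.card (Q : Subgroup G) = q ^ bb := Q.card_eq_multiplicity
    rw [← e3, ← e2]
    simpa using e1
  have hcommuv : Commute (u : G) (v : G) :=
    commute_of_distinct_prime_pow hnil hp hq hpq P.isPGroup' Q.isPGroup' hPn hQn u.2 v.2
  have hcouv : Nat.Coprime (orderOf (u : G)) (orderOf (v : G)) := by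
    rw [huord, hvord]
    exact Nat.Coprime.pow aa bb hcopq
  have hcyc : IsCyclic G := by
    apply isCyclic_of_orderOf_eq_card ((u : G) * (v : G))
    rw [hcommuv.orderOf_mul_eq_mul_orderOf_of_coprime hcouv, huord, hvord]
    exact hNpq.symm
  rcases Nat.lt_or_ge aa 2 with ha2 | ha2
  · have ha1 : aa = 1 := by omega
    exact ⟨hcyc, q, p, bb, hq, hp, hpq.symm, hbb, by rw [hNpq, ha1, pow_one, mul_comm]⟩
  rcases Nat.lt_or_ge bb 2 with hb2 | hb2
  · have hb1 : bb = 1 := by omega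
    exact ⟨hcyc, p, q, aa, hp, hq, hpq, haa, by rw [hNpq, hb1, pow_one]⟩
  exact (clawC hcf hp hq hpq ha2 hb2 hcommuv huord hvord).elim
end

section
/- Let G be a finite group, let g be a non-identity element of G, and let C = C_G(g) be the centralizer of g in G. If the reduced power graph P*(C) is claw-free, then |C| has at most 2 distinct prime divisors; moreover, if |C| has exactly 2 distinct prime divisors, then for one of these primes the corresponding Sylow subgroup of C is cyclic and normal in C. -/
open Subgroup

set_option linter.unusedSectionVars false
set_option maxHeartbeats 1000000

section Helpers

variable {C : Type*} [Group C] [Finite C]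

/-- From membership and order comparison, equality of zpowers subgroups. -/
lemma zpowers_eq_of_mem_of_orderOf_le {a b : C} (h : a ∈ zpowers b)
    (hc : orderOf b ≤ orderOf a) : zpowers a = zpowers b :=
  Subgroup.eq_of_le_of_card_ge (zpowers_le.mpr h)
    (by rwa [Nat.card_zpowers, Nat.card_zpowers])

/-- Any element of a cyclic group `zpowers t` of order `m` lies in the canonical
subgroup generated by `t ^ (orderOf t / m)`, which has order `m`. -/
lemma mem_canonical_of_mem_zpowers {t x : C} (hx : x ∈ zpowers t) :
    x ∈ zpowers (t ^ (orderOf t / orderOf x)) ∧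
      orderOf (t ^ (orderOf t / orderOf x)) = orderOf x := by
  have hfin : IsOfFinOrder t := isOfFinOrder_of_finite t
  obtain ⟨i, hi⟩ := hfin.mem_powers_iff_mem_zpowers.mpr hx
  subst hi
  beta_reduce
  beta_reduce at hx
  set n := orderOf t with hn
  have hnpos : 0 < n := orderOf_pos t
  have hord : orderOf (t ^ i) = n / n.gcd i := orderOf_pow t
  set d := n.gcd i with hd
  have hdn : d ∣ n := Nat.gcd_dvd_left n i
  have hdi : d ∣ i := Nat.gcd_dvd_right n i
  have hdiv : n / (n / d) = d := Nat.div_div_self hdn hnpos.ne'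
  have hexp : n / orderOf (t ^ i) = d := by rw [hord, hdiv]
  rw [hexp]
  constructor
  · have : (t ^ d) ^ (i / d) = t ^ i := by
      rw [← pow_mul, Nat.mul_div_cancel' hdi]
    rw [← this]
    exact Subgroup.pow_mem _ (mem_zpowers (t ^ d)) _
  · rw [orderOf_pow t, ← hn, Nat.gcd_eq_right hdn, hord]

/-- In a cyclic group, two elements of the same order generate the same subgroup. -/
lemma zpowers_eq_zpowers_of_orderOf_eq {t x s : C} (hx : x ∈ zpowers t)
    (hs : s ∈ zpowers t) (h : orderOf x = orderOf s) :
    zpowers x = zpowers s := by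
  obtain ⟨hx1, hx2⟩ := mem_canonical_of_mem_zpowers hx
  obtain ⟨hs1, hs2⟩ := mem_canonical_of_mem_zpowers hs
  rw [← h] at hs1 hs2
  have e1 : zpowers x = zpowers (t ^ (orderOf t / orderOf x)) :=
    zpowers_eq_of_mem_of_orderOf_le hx1 hx2.le
  have e2 : zpowers s = zpowers (t ^ (orderOf t / orderOf x)) :=
    zpowers_eq_of_mem_of_orderOf_le hs1 ((hx2.trans h).le)
  rw [e1, e2]

/-- If `a` and `b` commute and have coprime orders then `b ∈ ⟨a*b⟩`. -/
lemma mem_zpowers_mul_right {a b : C} (h : Commute a b)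
    (hco : (orderOf a).Coprime (orderOf b)) : b ∈ zpowers (a * b) := by
  have hm : (a * b) ^ orderOf a = b ^ orderOf a := by
    rw [h.mul_pow, pow_orderOf_eq_one, one_mul]
  have h1 : orderOf (b ^ orderOf a) = orderOf b := by
    rw [orderOf_pow b, Nat.Coprime.gcd_eq_one hco.symm, Nat.div_one]
  have h2 : zpowers (b ^ orderOf a) = zpowers b :=
    zpowers_eq_of_mem_of_orderOf_le (Subgroup.pow_mem _ (mem_zpowers b) _) h1.ge
  have h3 : b ∈ zpowers (b ^ orderOf a) := h2 ▸ mem_zpowers b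
  rw [← hm] at h3
  exact zpowers_le.mpr (Subgroup.pow_mem _ (mem_zpowers (a * b)) _) h3

lemma mem_zpowers_mul_left {a b : C} (h : Commute a b)
    (hco : (orderOf a).Coprime (orderOf b)) : a ∈ zpowers (a * b) := by
  have := mem_zpowers_mul_right h.symm hco.symm
  rwa [← h.eq] at this

/-- A subgroup contained (elementwise) in a union of two subgroups is contained
in one of them. -/
lemma subgroup_le_or_le_of_mem_union {H K L : Subgroup C}
    (h : ∀ w ∈ H, w ∈ K ∨ w ∈ L) : H ≤ K ∨ H ≤ L := by
  by_contra hcon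
  push_neg at hcon
  obtain ⟨hK, hL⟩ := hcon
  obtain ⟨a, haH, haK⟩ := SetLike.not_le_iff_exists.mp hK
  obtain ⟨b, hbH, hbL⟩ := SetLike.not_le_iff_exists.mp hL
  have haL : a ∈ L := (h a haH).resolve_left haK
  have hbK : b ∈ K := (h b hbH).resolve_right hbL
  rcases h _ (mul_mem haH hbH) with hab | hab
  · exact haK (by simpa using mul_mem hab (inv_mem hbK))
  · exact hbL (by simpa using mul_mem (inv_mem haL) hab)

lemma orderOf_conj' (c w : C) : orderOf (c * w * c⁻¹) = orderOf w := by
  simpa using orderOf_injective (MulAut.conj c).toMonoidHom (MulEquiv.injective _) w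

lemma isCyclic_zpowers (a : C) : IsCyclic (zpowers a) := by
  refine ⟨⟨⟨a, mem_zpowers a⟩, fun x => ?_⟩⟩
  obtain ⟨k, hk⟩ := Subgroup.mem_zpowers_iff.mp x.2
  exact Subgroup.mem_zpowers_iff.mpr ⟨k, by ext; simpa using hk⟩

/-- Nontrivial prime-power-order element has an element of order `q` among its powers. -/
lemma exists_orderOf_eq_prime_mem {q : ℕ} (hq : q.Prime) {w : C} {k : ℕ}
    (hk : orderOf w = q ^ k) (hw : w ≠ 1) :
    ∃ v ∈ zpowers w, orderOf v = q := by
  have hk1 : 1 ≤ k := by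
    by_contra hk0
    push_neg at hk0
    interval_cases k
    · exact hw (orderOf_eq_one_iff.mp (by simpa using hk))
  refine ⟨w ^ q ^ (k - 1), Subgroup.pow_mem _ (mem_zpowers w) _, ?_⟩
  have hdvd : q ^ (k - 1) ∣ q ^ k := pow_dvd_pow q (Nat.sub_le k 1)
  rw [orderOf_pow w, hk, Nat.gcd_eq_right hdvd, Nat.pow_div (Nat.sub_le k 1) hq.pos,
    Nat.sub_sub_self hk1, pow_one]

end Helpers

section Claws

variable {C : Type*} [Group C] [Finite C]

/-- Produce a contradiction from explicit claw data. -/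
lemma claw_false (hcf : IsClawFree (reducedPowerGraph C)) {b a1 a2 a3 : C}
    (hb : b ≠ 1) (h1 : a1 ≠ 1) (h2 : a2 ≠ 1) (h3 : a3 ≠ 1)
    (h12 : a1 ≠ a2) (h13 : a1 ≠ a3) (h23 : a2 ≠ a3)
    (hb1 : PowAdj b a1) (hb2 : PowAdj b a2) (hb3 : PowAdj b a3)
    (n12 : ¬ PowAdj a1 a2) (n13 : ¬ PowAdj a1 a3) (n23 : ¬ PowAdj a2 a3) :
    False := by
  refine hcf ⟨⟨b, hb⟩, ⟨a1, h1⟩, ⟨a2, h2⟩, ⟨a3, h3⟩, ?_, ?_, ?_, hb1, hb2, hb3, n12, n13, n23⟩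
  · exact fun h => h12 (congrArg Subtype.val h)
  · exact fun h => h13 (congrArg Subtype.val h)
  · exact fun h => h23 (congrArg Subtype.val h)

variable {p q : ℕ} (hp : p.Prime) (hq : q.Prime) (hpq : p ≠ q)
variable {z : C} (hz : orderOf z = p) (hzc : ∀ c : C, Commute c z)

include hp hq hpq hz hzc in
/-- Basic facts about `u*z` for an element `u` of order `q`. -/
lemma uz_facts {u : C} (hu : orderOf u = q) :
    orderOf (u * z) = q * p ∧ z ∈ zpowers (u * z) ∧ u ∈ zpowers (u * z) := by
  have hco : (orderOf u).Coprime (orderOf z) := by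
    rw [hu, hz]; exact (Nat.coprime_primes hq hp).mpr (Ne.symm hpq)
  have hcomm : Commute u z := hzc u
  refine ⟨?_, ?_, ?_⟩
  · rw [hcomm.orderOf_mul_eq_mul_orderOf_of_coprime hco, hu, hz]
  · exact mem_zpowers_mul_right hcomm hco
  · exact mem_zpowers_mul_left hcomm hco

include hp hq hpq hz hzc in
/-- Two elements of order `q` generating distinct subgroups yield non-adjacent
`u*z`, `w*z`. -/
lemma not_powAdj_uz_wz {u w : C} (hu : orderOf u = q) (hw : orderOf w = q)
    (hne : zpowers u ≠ zpowers w) : ¬ PowAdj (u * z) (w * z) := by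
  obtain ⟨hou, hzu, huu⟩ := uz_facts hp hq hpq hz hzc hu
  obtain ⟨how, hzw, hww⟩ := uz_facts hp hq hpq hz hzc hw
  rintro ⟨-, h | h⟩
  · have heq : zpowers (u * z) = zpowers (w * z) :=
      zpowers_eq_of_mem_of_orderOf_le h (by rw [hou, how])
    exact hne (zpowers_eq_zpowers_of_orderOf_eq (heq ▸ huu) hww (hu.trans hw.symm))
  · have heq : zpowers (w * z) = zpowers (u * z) :=
      zpowers_eq_of_mem_of_orderOf_le h (by rw [hou, how])
    exact hne (zpowers_eq_zpowers_of_orderOf_eq huu (heq ▸ hww) (hu.trans hw.symm))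

include hp hq hpq hz hzc in
/-- Claw 1: three distinct subgroups of order `q` give a claw at `z`. -/
lemma claw_of_three_min (hcf : IsClawFree (reducedPowerGraph C))
    {x s v : C} (hx : orderOf x = q) (hs : orderOf s = q) (hv : orderOf v = q)
    (hxs : zpowers x ≠ zpowers s) (hxv : zpowers x ≠ zpowers v)
    (hsv : zpowers s ≠ zpowers v) : False := by
  obtain ⟨hox, hzx, hxx⟩ := uz_facts hp hq hpq hz hzc hx
  obtain ⟨hos, hzs, hss⟩ := uz_facts hp hq hpq hz hzc hs
  obtain ⟨hov, hzv, hvv⟩ := uz_facts hp hq hpq hz hzc hv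
  have hq1 : q ≠ 1 := hq.ne_one
  have hqp1 : q * p ≠ 1 := by
    intro h
    exact hq1 (Nat.eq_one_of_mul_eq_one_right h)
  have hne1 : ∀ u : C, orderOf (u * z) = q * p → u * z ≠ 1 := fun u hou h1 =>
    hqp1 (by rw [← hou, h1, orderOf_one])
  have hneu : ∀ u : C, orderOf u = q → z ≠ u * z := by
    intro u hu h
    have h1 : u * z = 1 * z := by rw [one_mul]; exact h.symm
    exact hq1 (by rw [← hu, mul_right_cancel h1, orderOf_one])
  have hdist : ∀ u w : C, orderOf u = q → orderOf w = q → zpowers u ≠ zpowers w →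
      u * z ≠ w * z := by
    intro u w hu hw hne h
    exact hne (by rw [mul_right_cancel h])
  refine claw_false hcf (b := z) (a1 := x * z) (a2 := s * z) (a3 := v * z)
    ?_ (hne1 _ hox) (hne1 _ hos) (hne1 _ hov)
    (hdist _ _ hx hs hxs) (hdist _ _ hx hv hxv) (hdist _ _ hs hv hsv)
    ⟨hneu _ hx, Or.inl hzx⟩ ⟨hneu _ hs, Or.inl hzs⟩ ⟨hneu _ hv, Or.inl hzv⟩
    (not_powAdj_uz_wz hp hq hpq hz hzc hx hs hxs)
    (not_powAdj_uz_wz hp hq hpq hz hzc hx hv hxv)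
    (not_powAdj_uz_wz hp hq hpq hz hzc hs hv hsv)
  · intro h
    exact hp.ne_one (by rw [← hz, h, orderOf_one])

include hp hq hpq hz hzc in
/-- Claw 2 (chain lemma): two `q`-elements above a common element of order `q`
are comparable. -/
lemma comparable_of_mem (hcf : IsClawFree (reducedPowerGraph C))
    {x w1 w2 : C} (hx : orderOf x = q) {k1 k2 : ℕ}
    (h1 : orderOf w1 = q ^ k1) (h2 : orderOf w2 = q ^ k2)
    (hm1 : x ∈ zpowers w1) (hm2 : x ∈ zpowers w2) :
    w1 ∈ zpowers w2 ∨ w2 ∈ zpowers w1 := by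
  by_contra hcon
  push_neg at hcon
  obtain ⟨hn12, hn21⟩ := hcon
  obtain ⟨hoxz, hzxz, hxxz⟩ := uz_facts hp hq hpq hz hzc hx
  have hq1 : q ≠ 1 := hq.ne_one
  have hx1 : x ≠ 1 := fun h => hq1 (by rw [← hx, h, orderOf_one])
  have hz1 : z ≠ 1 := fun h => hp.ne_one (by rw [← hz, h, orderOf_one])
  have hdvd : ∀ w : C, x ∈ zpowers w → q ∣ orderOf w := fun w hw =>
    hx ▸ orderOf_dvd_of_mem_zpowers hw
  have hw11 : w1 ≠ 1 := by
    intro h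
    have := hdvd w1 hm1
    rw [h, orderOf_one] at this
    exact hq1 (Nat.eq_one_of_dvd_one this)
  have hw21 : w2 ≠ 1 := by
    intro h
    have := hdvd w2 hm2
    rw [h, orderOf_one] at this
    exact hq1 (Nat.eq_one_of_dvd_one this)
  have hpq' : ∀ k : ℕ, ¬ (p ∣ q ^ k) := by
    intro k h
    exact hpq ((Nat.prime_dvd_prime_iff_eq hp hq).mp (hp.dvd_of_dvd_pow h))
  -- leaves are distinct from x*z
  have hne_leaf : ∀ (w : C) (k : ℕ), orderOf w = q ^ k → w ≠ x * z := by
    intro w k hk h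
    exact hpq' k (by rw [← hk, h, hoxz]; exact dvd_mul_left p q)
  -- non-adjacency of wi with x*z
  have key : ∀ (w w' : C) (k : ℕ), orderOf w = q ^ k → x ∈ zpowers w →
      x ∈ zpowers w' → w ∉ zpowers w' → ¬ PowAdj w (x * z) := by
    rintro w w' k hk hmw hmw' hnot ⟨-, h | h⟩
    · have hdq : orderOf w ∣ q * p := hoxz ▸ orderOf_dvd_of_mem_zpowers h
      have hcop : (q ^ k).Coprime p := Nat.Coprime.pow_left _
        ((Nat.coprime_primes hq hp).mpr (Ne.symm hpq))
      have hqk : q ^ k ∣ q := Nat.Coprime.dvd_of_dvd_mul_right hcop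
        (by rwa [hk] at hdq)
      have hwq : orderOf w = q := Nat.dvd_antisymm (hk ▸ hqk) (hdvd w hmw)
      have heq : zpowers x = zpowers w :=
        zpowers_eq_of_mem_of_orderOf_le hmw (by rw [hx, hwq])
      exact hnot (zpowers_le.mpr hmw' (heq ▸ mem_zpowers w))
    · have : q * p ∣ q ^ k := by
        rw [← hoxz, ← hk]; exact orderOf_dvd_of_mem_zpowers h
      exact hpq' k (dvd_trans (dvd_mul_left p q) this)
  have hxw1 : x ≠ w1 := fun h => hn12 (h ▸ hm2)
  have hxw2 : x ≠ w2 := fun h => hn21 (h ▸ hm1)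
  have hxz1 : x * z ≠ 1 := by
    intro h
    have h2' : q * p = 1 := by rw [← hoxz, h, orderOf_one]
    exact hq1 (Nat.eq_one_of_mul_eq_one_right h2')
  have hxxz_ne : x ≠ x * z := by
    intro h
    exact hz1 (mul_left_cancel (a := x) (show x * 1 = x * z by simpa using h)).symm
  refine claw_false hcf (b := x) (a1 := w1) (a2 := w2) (a3 := x * z)
    hx1 hw11 hw21 hxz1
    (fun h => hn12 (h ▸ mem_zpowers w2))
    (hne_leaf w1 k1 h1) (hne_leaf w2 k2 h2)
    ⟨hxw1, Or.inl hm1⟩ ⟨hxw2, Or.inl hm2⟩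
    ⟨hxxz_ne, Or.inl hxxz⟩
    ?_ (key w1 w2 k1 h1 hm1 hm2 hn12) (key w2 w1 k2 h2 hm2 hm1 hn21)
  rintro ⟨-, h | h⟩
  · exact hn12 h
  · exact hn21 h


/-- Claw 3: three pairwise-commuting elements of distinct prime orders give a claw. -/
lemma three_primes_claw (hcf : IsClawFree (reducedPowerGraph C))
    {p q r : ℕ} (hp : p.Prime) (hq : q.Prime) (hr : r.Prime)
    (hpq : p ≠ q) (hpr : p ≠ r) (hqr : q ≠ r)
    {x y z : C} (hx : orderOf x = q) (hy : orderOf y = r) (hz : orderOf z = p)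
    (hxy : Commute x y) (hxz : Commute x z) (hyz : Commute y z) : False := by
  have cqr : Nat.Coprime q r := (Nat.coprime_primes hq hr).mpr hqr
  have cqp : Nat.Coprime q p := (Nat.coprime_primes hq hp).mpr (Ne.symm hpq)
  have crp : Nat.Coprime r p := (Nat.coprime_primes hr hp).mpr (Ne.symm hpr)
  have hcoyz : (orderOf y).Coprime (orderOf z) := by rw [hy, hz]; exact crp
  have hoyz : orderOf (y * z) = r * p := by
    rw [hyz.orderOf_mul_eq_mul_orderOf_of_coprime hcoyz, hy, hz]
  have hcx : Commute x (y * z) := hxy.mul_right hxz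
  have hcox : (orderOf x).Coprime (orderOf (y * z)) := by
    rw [hx, hoyz]; exact Nat.Coprime.mul_right cqr cqp
  set c := x * (y * z) with hc
  have hyzc : y * z ∈ zpowers c := mem_zpowers_mul_right hcx hcox
  have hxc : x ∈ zpowers c := mem_zpowers_mul_left hcx hcox
  have hyc : y ∈ zpowers c := zpowers_le.mpr hyzc (mem_zpowers_mul_left hyz hcoyz)
  have hzc' : z ∈ zpowers c := zpowers_le.mpr hyzc (mem_zpowers_mul_right hyz hcoyz)
  have hne1 : ∀ (a : C) (s : ℕ), s.Prime → orderOf a = s → a ≠ 1 := by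
    intro a s hs ha h
    exact hs.ne_one (by rw [← ha, h, orderOf_one])
  have hnadj : ∀ (a b : C) (s u : ℕ), s.Prime → u.Prime → s ≠ u →
      orderOf a = s → orderOf b = u → ¬ PowAdj a b := by
    rintro a b s u hs hu hsu ha hb ⟨-, h | h⟩
    · exact hsu ((Nat.prime_dvd_prime_iff_eq hs hu).mp
        (by rw [← ha, ← hb]; exact orderOf_dvd_of_mem_zpowers h))
    · exact hsu (((Nat.prime_dvd_prime_iff_eq hu hs).mp
        (by rw [← ha, ← hb]; exact orderOf_dvd_of_mem_zpowers h)).symm)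
  have hdvdq : q ∣ orderOf c := hx ▸ orderOf_dvd_of_mem_zpowers hxc
  have hdvdr : r ∣ orderOf c := hy ▸ orderOf_dvd_of_mem_zpowers hyc
  have hdvdp : p ∣ orderOf c := hz ▸ orderOf_dvd_of_mem_zpowers hzc'
  have hc1 : c ≠ 1 := by
    intro h
    rw [h, orderOf_one] at hdvdq
    exact hq.ne_one (Nat.eq_one_of_dvd_one hdvdq)
  have hcnx : c ≠ x := by
    intro h
    rw [h, hx] at hdvdr
    exact hqr (((Nat.prime_dvd_prime_iff_eq hr hq).mp hdvdr).symm)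
  have hcny : c ≠ y := by
    intro h
    rw [h, hy] at hdvdq
    exact hqr ((Nat.prime_dvd_prime_iff_eq hq hr).mp hdvdq)
  have hcnz : c ≠ z := by
    intro h
    rw [h, hz] at hdvdq
    exact hpq (((Nat.prime_dvd_prime_iff_eq hq hp).mp hdvdq).symm)
  have hdist : ∀ (a b : C) (s u : ℕ), s ≠ u → orderOf a = s → orderOf b = u → a ≠ b := by
    intro a b s u hsu ha hb h
    exact hsu (by rw [← ha, h, hb])
  exact claw_false hcf hc1 (hne1 x q hq hx) (hne1 y r hr hy) (hne1 z p hp hz)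
    (hdist x y q r hqr hx hy) (hdist x z q p (Ne.symm hpq) hx hz)
    (hdist y z r p (Ne.symm hpr) hy hz)
    ⟨hcnx, Or.inr hxc⟩ ⟨hcny, Or.inr hyc⟩ ⟨hcnz, Or.inr hzc'⟩
    (hnadj x y q r hq hr hqr hx hy) (hnadj x z q p hq hp (Ne.symm hpq) hx hz)
    (hnadj y z r p hr hp (Ne.symm hpr) hy hz)

/-- The master lemma: if the reduced power graph is claw-free and `z` is a
central element of prime order `p`, then for any other prime `q` dividing the
group order, all `q`-elements lie in a single cyclic subgroup. -/
lemma master (hcf : IsClawFree (reducedPowerGraph C))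
    {p q : ℕ} (hp : p.Prime) (hq : q.Prime) (hpq : p ≠ q)
    {z : C} (hz : orderOf z = p) (hzc : ∀ c : C, Commute c z)
    (hdvd : q ∣ Nat.card C) :
    ∃ t : C, (∃ m, orderOf t = q ^ m) ∧
      ∀ w : C, (∃ k, orderOf w = q ^ k) → w ∈ zpowers t := by
  classical
  haveI : Fact q.Prime := ⟨hq⟩
  haveI := Fintype.ofFinite C
  obtain ⟨x, hx⟩ := exists_prime_orderOf_dvd_card (G := C) q (by rwa [← Nat.card_eq_fintype_card])
  have top : ∀ a : C, orderOf a = q →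
      ∃ t : C, (∃ m, orderOf t = q ^ m) ∧ a ∈ zpowers t ∧
        ∀ w : C, (∃ k, orderOf w = q ^ k) → a ∈ zpowers w → w ∈ zpowers t := by
    intro a ha
    set F : Finset C := Finset.univ.filter
      (fun w => (∃ k, orderOf w = q ^ k) ∧ a ∈ zpowers w) with hF
    have hmemF : ∀ w : C, w ∈ F ↔ ((∃ k, orderOf w = q ^ k) ∧ a ∈ zpowers w) := by
      intro w; simp [hF]
    have hFne : F.Nonempty := ⟨a, (hmemF a).mpr ⟨⟨1, by rw [ha, pow_one]⟩, mem_zpowers a⟩⟩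
    obtain ⟨t, htF, hmax⟩ := F.exists_max_image orderOf hFne
    obtain ⟨⟨m, hm⟩, hat⟩ := (hmemF t).mp htF
    refine ⟨t, ⟨m, hm⟩, hat, ?_⟩
    rintro w ⟨k, hk⟩ haw
    rcases comparable_of_mem hp hq hpq hz hzc hcf ha hk hm haw hat with h | h
    · exact h
    · have hle : orderOf w ≤ orderOf t := hmax w ((hmemF w).mpr ⟨⟨k, hk⟩, haw⟩)
      have heq : zpowers t = zpowers w := zpowers_eq_of_mem_of_orderOf_le h hle
      exact heq ▸ mem_zpowers w
  by_cases hcase : ∀ w : C, (∃ k, orderOf w = q ^ k) → w ≠ 1 → x ∈ zpowers w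
  · obtain ⟨t, htq, hxt, htop⟩ := top x hx
    refine ⟨t, htq, ?_⟩
    rintro w hw
    by_cases hw1 : w = 1
    · exact hw1 ▸ one_mem _
    · exact htop w hw (hcase w hw hw1)
  · exfalso
    push_neg at hcase
    obtain ⟨s, hsq, hs1, hxs⟩ := hcase
    obtain ⟨k, hk⟩ := hsq
    obtain ⟨s', hs'm, hs'⟩ := exists_orderOf_eq_prime_mem hq hk hs1
    have hxns' : zpowers x ≠ zpowers s' := by
      intro h
      exact hxs (zpowers_le.mpr hs'm (h ▸ mem_zpowers x))
    have hdich : ∀ v : C, orderOf v = q →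
        zpowers v = zpowers x ∨ zpowers v = zpowers s' := by
      intro v hv
      by_contra hcon
      push_neg at hcon
      exact claw_of_three_min hp hq hpq hz hzc hcf hx hs' hv
        hxns' (Ne.symm hcon.1) (Ne.symm hcon.2)
    obtain ⟨tx, htxq, hxtx, htopx⟩ := top x hx
    obtain ⟨ts, htsq, hsts, htops⟩ := top s' hs'
    have hnotboth : ∀ u : C, x ∈ zpowers u → s' ∈ zpowers u → False := by
      intro u h1 h2
      exact hxns' (zpowers_eq_zpowers_of_orderOf_eq h1 h2 (hx.trans hs'.symm))
    have hcover : ∀ w : C, (∃ k, orderOf w = q ^ k) →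
        w ∈ zpowers tx ∨ w ∈ zpowers ts := by
      rintro w hw
      by_cases hw1 : w = 1
      · exact Or.inl (hw1 ▸ one_mem _)
      obtain ⟨j, hj⟩ := hw
      obtain ⟨v, hvm, hv⟩ := exists_orderOf_eq_prime_mem hq hj hw1
      rcases hdich v hv with h | h
      · exact Or.inl (htopx w ⟨j, hj⟩ (zpowers_le.mpr hvm (h.symm ▸ mem_zpowers x)))
      · exact Or.inr (htops w ⟨j, hj⟩ (zpowers_le.mpr hvm (h.symm ▸ mem_zpowers s')))
    have hpgrp : ∀ (t : C), (∃ m, orderOf t = q ^ m) → IsPGroup q (zpowers t) := by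
      rintro t ⟨m, hm⟩
      exact IsPGroup.of_card (by rw [Nat.card_zpowers, hm])
    have hSyl_el : ∀ (R : Sylow q C) (w : C), w ∈ (R : Subgroup C) →
        ∃ k, orderOf w = q ^ k := by
      intro R w hw
      obtain ⟨nn, hnn⟩ := R.isPGroup' ⟨w, hw⟩
      have hw1 : w ^ q ^ nn = 1 := by
        have := congrArg (Subgroup.subtype _) hnn
        simpa using this
      obtain ⟨j, _, hj⟩ := (Nat.dvd_prime_pow hq).mp (orderOf_dvd_of_pow_eq_one hw1)
      exact ⟨j, hj⟩
    have hSy : ∀ R : Sylow q C,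
        (R : Subgroup C) = zpowers tx ∨ (R : Subgroup C) = zpowers ts := by
      intro R
      rcases subgroup_le_or_le_of_mem_union
        (fun w hw => hcover w (hSyl_el R w hw)) with h | h
      · exact Or.inl (R.is_maximal' (hpgrp tx htxq) h).symm
      · exact Or.inr (R.is_maximal' (hpgrp ts htsq) h).symm
    obtain ⟨Qx, hQx⟩ := (hpgrp tx htxq).exists_le_sylow
    obtain ⟨Qs, hQs⟩ := (hpgrp ts htsq).exists_le_sylow
    have hts_x : ¬ (zpowers tx ≤ zpowers ts) := fun h => hnotboth ts (h hxtx) hsts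
    have htx_s : ¬ (zpowers ts ≤ zpowers tx) := fun h => hnotboth tx hxtx (h hsts)
    have hQxeq : (Qx : Subgroup C) = zpowers tx := by
      rcases hSy Qx with h | h
      · exact h
      · exact absurd (h ▸ hQx) hts_x
    have hQseq : (Qs : Subgroup C) = zpowers ts := by
      rcases hSy Qs with h | h
      · exact absurd (h ▸ hQs) htx_s
      · exact h
    have hQne : Qx ≠ Qs := by
      intro h
      have heq : zpowers tx = zpowers ts := by rw [← hQxeq, h, hQseq]
      exact hnotboth ts (heq ▸ hxtx) hsts
    haveI : Nontrivial (Sylow q C) := ⟨⟨Qx, Qs, hQne⟩⟩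
    have hinj : Function.Injective
        (fun R : Sylow q C => ((R : Subgroup C) = zpowers tx : Prop)) := by
      intro R1 R2 h
      by_cases c1 : (R1 : Subgroup C) = zpowers tx
      · have c2 : (R2 : Subgroup C) = zpowers tx := (iff_of_eq h).mp c1
        exact Sylow.ext (c1.trans c2.symm)
      · have c2 : ¬ (R2 : Subgroup C) = zpowers tx := fun hh => c1 ((iff_of_eq h).mpr hh)
        have d1 := (hSy R1).resolve_left c1
        have d2 := (hSy R2).resolve_left c2
        exact Sylow.ext (d1.trans d2.symm)
    have hcard_le : Nat.card (Sylow q C) ≤ 2 := by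
      have := Nat.card_le_card_of_injective _ hinj
      rwa [Nat.card_eq_fintype_card (α := Prop), Fintype.card_prop] at this
    have hcard_ge : 1 < Nat.card (Sylow q C) := by
      haveI := Fintype.ofFinite (Sylow q C)
      rw [Nat.card_eq_fintype_card]
      exact Fintype.one_lt_card_iff_nontrivial.mpr ‹_›
    have heq2 : Nat.card (Sylow q C) = 2 := le_antisymm hcard_le hcard_ge
    have hmod := card_sylow_modEq_one q C
    rw [heq2] at hmod
    rcases eq_or_lt_of_le hq.two_le with hq2 | hq3
    · rw [← hq2] at hmod
      exact absurd hmod (by decide)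
    · have e1 : 2 % q = 2 := Nat.mod_eq_of_lt hq3
      have e2 : 1 % q = 1 := Nat.mod_eq_of_lt (lt_trans one_lt_two hq3)
      rw [Nat.ModEq, e1, e2] at hmod
      exact absurd hmod (by norm_num)

/-- Normality of the cyclic subgroup containing all `q`-elements. -/
lemma master_normal {s : ℕ} (hs : s.Prime) {u : C} {m : ℕ} (hu : orderOf u = s ^ m)
    (hcov : ∀ w : C, (∃ k, orderOf w = s ^ k) → w ∈ zpowers u) :
    (zpowers u).Normal := by
  constructor
  intro w hw c
  have h1 : orderOf w ∣ s ^ m := hu ▸ orderOf_dvd_of_mem_zpowers hw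
  obtain ⟨j, _, hj⟩ := (Nat.dvd_prime_pow hs).mp h1
  exact hcov _ ⟨j, (orderOf_conj' c w).trans hj⟩

end Claws

theorem stmt_16 {G : Type*} [Group G] [Finite G] (g : G) (hg : g ≠ 1)
    (hcf : IsClawFree (reducedPowerGraph ↥(Subgroup.centralizer ({g} : Set G)))) :
    (Nat.card ↥(Subgroup.centralizer ({g} : Set G))).primeFactors.card ≤ 2 ∧
      ((Nat.card ↥(Subgroup.centralizer ({g} : Set G))).primeFactors.card = 2 →
        ∃ p ∈ (Nat.card ↥(Subgroup.centralizer ({g} : Set G))).primeFactors,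
          ∃ P : Sylow p ↥(Subgroup.centralizer ({g} : Set G)),
            IsCyclic ↥(P : Subgroup ↥(Subgroup.centralizer ({g} : Set G))) ∧
              (P : Subgroup ↥(Subgroup.centralizer ({g} : Set G))).Normal) := by
  classical
  set Cg := Subgroup.centralizer ({g} : Set G) with hCgdef
  have hgmem : g ∈ Cg := by
    rw [hCgdef, Subgroup.mem_centralizer_iff]
    rintro h hh
    rw [Set.mem_singleton_iff] at hh
    subst hh
    rfl
  set g' : Cg := ⟨g, hgmem⟩ with hg'def
  have hg'1 : g' ≠ 1 := fun h => hg (congrArg Subtype.val h)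
  have hcent : ∀ c : Cg, Commute c g' := by
    intro c
    have hc := c.2
    rw [Subgroup.mem_centralizer_iff] at hc
    have hgc := hc g (Set.mem_singleton g)
    refine Subtype.ext ?_
    show (c : G) * g = g * (c : G)
    exact hgc.symm
  have hord1 : orderOf g' ≠ 1 := by
    intro h
    exact hg'1 (orderOf_eq_one_iff.mp h)
  set n := orderOf g' with hn
  set p := n.minFac with hpdef
  have hp : p.Prime := Nat.minFac_prime hord1
  have hpn : p ∣ n := Nat.minFac_dvd n
  have hnpos : n ≠ 0 := (orderOf_pos g').ne'
  set z : Cg := g' ^ (n / p) with hzdef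
  have hz : orderOf z = p := by
    rw [hzdef, orderOf_pow g', ← hn, Nat.gcd_eq_right (Nat.div_dvd_of_dvd hpn),
      Nat.div_div_self hpn hnpos]
  have hzc : ∀ c : Cg, Commute c z := fun c => (hcent c).pow_right _
  have hpdvd : p ∣ Nat.card Cg := hpn.trans (hn ▸ orderOf_dvd_natCard g')
  have hcard0 : Nat.card Cg ≠ 0 := Nat.card_pos.ne'
  have hpf : p ∈ (Nat.card Cg).primeFactors := Nat.mem_primeFactors.mpr ⟨hp, hpdvd, hcard0⟩
  constructor
  · -- at most two prime factors
    by_contra hgt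
    push_neg at hgt
    have herase : 2 ≤ ((Nat.card Cg).primeFactors.erase p).card := by
      have h1 := Finset.card_erase_of_mem hpf
      omega
    obtain ⟨a, ha, b, hb, hab⟩ := Finset.one_lt_card.mp (lt_of_lt_of_le one_lt_two herase)
    have haq : a.Prime ∧ a ∣ Nat.card Cg := by
      have h1 := Finset.mem_of_mem_erase ha
      rw [Nat.mem_primeFactors] at h1
      exact ⟨h1.1, h1.2.1⟩
    have hap : a ≠ p := Finset.ne_of_mem_erase ha
    have hbq : b.Prime ∧ b ∣ Nat.card Cg := by
      have h1 := Finset.mem_of_mem_erase hb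
      rw [Nat.mem_primeFactors] at h1
      exact ⟨h1.1, h1.2.1⟩
    have hbp : b ≠ p := Finset.ne_of_mem_erase hb
    obtain ⟨ta, ⟨ma, hma⟩, hta⟩ := master hcf hp haq.1 (Ne.symm hap) hz hzc haq.2
    obtain ⟨tb, ⟨mb, hmb⟩, htb⟩ := master hcf hp hbq.1 (Ne.symm hbp) hz hzc hbq.2
    have hna := master_normal haq.1 hma hta
    have hnb := master_normal hbq.1 hmb htb
    haveI := Fintype.ofFinite Cg
    haveI : Fact a.Prime := ⟨haq.1⟩
    haveI : Fact b.Prime := ⟨hbq.1⟩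
    obtain ⟨xa, hxa⟩ := exists_prime_orderOf_dvd_card (G := ↥Cg) a
      (by rw [← Nat.card_eq_fintype_card]; exact haq.2)
    obtain ⟨xb, hxb⟩ := exists_prime_orderOf_dvd_card (G := ↥Cg) b
      (by rw [← Nat.card_eq_fintype_card]; exact hbq.2)
    have hxamem : xa ∈ Subgroup.zpowers ta := hta xa ⟨1, by rw [hxa, pow_one]⟩
    have hxbmem : xb ∈ Subgroup.zpowers tb := htb xb ⟨1, by rw [hxb, pow_one]⟩
    have hdisj : Disjoint (Subgroup.zpowers ta) (Subgroup.zpowers tb) := by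
      rw [Subgroup.disjoint_def]
      intro u h1 h2
      have d1 : orderOf u ∣ a ^ ma := hma ▸ orderOf_dvd_of_mem_zpowers h1
      have d2 : orderOf u ∣ b ^ mb := hmb ▸ orderOf_dvd_of_mem_zpowers h2
      have hco : Nat.Coprime (a ^ ma) (b ^ mb) :=
        ((Nat.coprime_primes haq.1 hbq.1).mpr hab).pow ma mb
      have hd1 : orderOf u ∣ 1 := hco ▸ Nat.dvd_gcd d1 d2
      exact orderOf_eq_one_iff.mp (Nat.dvd_one.mp hd1)
    have hcomm : Commute xa xb :=
      Subgroup.commute_of_normal_of_disjoint _ _ hna hnb hdisj xa xb hxamem hxbmem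
    exact three_primes_claw hcf hp haq.1 hbq.1 (Ne.symm hap) (Ne.symm hbp) hab
      hxa hxb hz hcomm (hzc xa) (hzc xb)
  · intro hcard2
    have h1 : ((Nat.card Cg).primeFactors.erase p).card = 1 := by
      rw [Finset.card_erase_of_mem hpf, hcard2]
    obtain ⟨q0, hq0⟩ := Finset.card_eq_one.mp h1
    have hq0mem' : q0 ∈ (Nat.card Cg).primeFactors.erase p := by
      rw [hq0]; exact Finset.mem_singleton_self q0
    have hq0mem : q0 ∈ (Nat.card Cg).primeFactors := Finset.mem_of_mem_erase hq0mem'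
    have hq0ne : q0 ≠ p := Finset.ne_of_mem_erase hq0mem'
    have hq0p : q0.Prime ∧ q0 ∣ Nat.card Cg := by
      rw [Nat.mem_primeFactors] at hq0mem
      exact ⟨hq0mem.1, hq0mem.2.1⟩
    obtain ⟨t, ⟨m, hm⟩, htop⟩ := master hcf hp hq0p.1 (Ne.symm hq0ne) hz hzc hq0p.2
    have hpg : IsPGroup q0 (Subgroup.zpowers t) :=
      IsPGroup.of_card (by rw [Nat.card_zpowers, hm])
    obtain ⟨P, hP⟩ := hpg.exists_le_sylow
    haveI : Fact q0.Prime := ⟨hq0p.1⟩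
    have hPeq : (P : Subgroup Cg) = Subgroup.zpowers t := by
      refine le_antisymm ?_ hP
      intro w hw
      obtain ⟨nn, hnn⟩ := P.isPGroup' ⟨w, hw⟩
      have hw1 : w ^ q0 ^ nn = 1 := by
        have := congrArg (Subgroup.subtype _) hnn
        simpa using this
      obtain ⟨j, _, hj⟩ := (Nat.dvd_prime_pow hq0p.1).mp (orderOf_dvd_of_pow_eq_one hw1)
      exact htop w ⟨j, hj⟩
    refine ⟨q0, hq0mem, P, ?_, ?_⟩
    · rw [hPeq]
      exact _root_.isCyclic_zpowers t
    · rw [hPeq]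
      exact master_normal hq0p.1 hm htop
end

section
/- Let p and q be distinct primes and let G be a finite group with a normal subgroup P and a subgroup Q such that P is a non-cyclic elementary abelian p-group, Q is a q-group, P ∩ Q = 1 and G = PQ. If the reduced power graph P*(G) is claw-free, then for every non-identity element y of Q the centralizer of y in P is trivial. -/
lemma s18_eq_one_of_coprime_pows {G : Type*} [Group G] {a b : ℕ} (hco : Nat.Coprime a b) {g : G}
    (ha : g ^ a = 1) (hb : g ^ b = 1) : g = 1 := by
  have h1 : orderOf g ∣ Nat.gcd a b :=
    Nat.dvd_gcd (orderOf_dvd_of_pow_eq_one ha) (orderOf_dvd_of_pow_eq_one hb)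
  rw [hco] at h1
  exact orderOf_eq_one_iff.mp (Nat.dvd_one.mp h1)

lemma s18_zpow_eq_one_of_mul {G : Type*} [Group G] {p N : ℕ} (hp : p.Prime) {g : G} (hg : g ^ p = 1)
    (hN : ¬ p ∣ N) {n : ℤ} (h : g ^ (n * N) = 1) : g ^ n = 1 := by
  have hd : orderOf g ∣ p := orderOf_dvd_of_pow_eq_one hg
  rcases (Nat.Prime.eq_one_or_self_of_dvd hp _ hd) with h1 | h1
  · have : g = 1 := orderOf_eq_one_iff.mp h1
    simp [this]
  · have hdvd : ((p : ℤ)) ∣ n * N := by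
      rw [← h1]; exact orderOf_dvd_iff_zpow_eq_one.mpr h
    have hip : Prime (p : ℤ) := Nat.prime_iff_prime_int.mp hp
    rcases hip.dvd_mul.mp hdvd with h2 | h2
    · rw [orderOf_dvd_iff_zpow_eq_one.symm, h1]; exact h2
    · exact absurd (Int.natCast_dvd_natCast.mp h2) hN

lemma s18_mem_zpowers_mul {G : Type*} [Group G] {p N : ℕ} {x t : G} (hc : x * t = t * x) (hx : x ^ p = 1)
    (ht : t ^ N = 1) (hco : Nat.Coprime p N) :
    x ∈ Subgroup.zpowers (x * t) ∧ t ∈ Subgroup.zpowers (x * t) := by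
  obtain ⟨u, v, huv⟩ := Nat.isCoprime_iff_coprime.mpr hco
  have hC : Commute x t := hc
  have hxm : x ∈ Subgroup.zpowers (x * t) := by
    refine Subgroup.mem_zpowers_iff.mpr ⟨v * N, ?_⟩
    rw [hC.mul_zpow]
    have h1 : t ^ (v * (N : ℤ)) = 1 := by
      rw [mul_comm, zpow_mul, zpow_natCast, ht, one_zpow]
    have h2 : x ^ (v * (N : ℤ)) = x := by
      have he : v * (N : ℤ) = 1 - u * p := by linarith
      rw [he, zpow_sub, zpow_one]
      have : x ^ (u * (p : ℤ)) = 1 := by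
        rw [mul_comm, zpow_mul, zpow_natCast, hx, one_zpow]
      rw [this, inv_one, mul_one]
    rw [h1, h2, mul_one]
  refine ⟨hxm, ?_⟩
  have hmem := mul_mem (inv_mem hxm) (Subgroup.mem_zpowers (x * t))
  have : x⁻¹ * (x * t) = t := by group
  rwa [this] at hmem

lemma s18_zpowers_symm {G : Type*} [Group G] [Finite G] {p : ℕ} (hp : p.Prime) {u v : G} (hu : u ^ p = 1)
    (hv : v ^ p = 1) (hu1 : u ≠ 1) (h : u ∈ Subgroup.zpowers v) :
    v ∈ Subgroup.zpowers u := by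
  haveI : Fact p.Prime := ⟨hp⟩
  have hv1 : v ≠ 1 := by rintro rfl; simp [Subgroup.mem_zpowers_iff] at h; exact hu1 h
  have hou : orderOf u = p := orderOf_eq_prime hu hu1
  have hov : orderOf v = p := orderOf_eq_prime hv hv1
  have hle : Subgroup.zpowers u ≤ Subgroup.zpowers v := Subgroup.zpowers_le.mpr h
  have hcard : Nat.card (Subgroup.zpowers v) ≤ Nat.card (Subgroup.zpowers u) := by
    rw [Nat.card_zpowers, Nat.card_zpowers, hou, hov]
  have := Subgroup.eq_of_le_of_card_ge hle hcard
  rw [this]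
  exact Subgroup.mem_zpowers _


theorem stmt_18 {G : Type*} [Group G] [Finite G] (p q : ℕ)
    (hp : p.Prime) (hq : q.Prime) (hpq : p ≠ q)
    (P Q : Subgroup G) (hPn : P.Normal)
    (hPab : ∀ a b : ↥P, a * b = b * a) (hPel : ∀ x ∈ P, x ^ p = 1)
    (hPnc : ¬ IsCyclic ↥P) (hQ : IsPGroup q ↥Q)
    (hint : P ⊓ Q = ⊥) (hjoin : P ⊔ Q = ⊤)
    (hcf : IsClawFree (reducedPowerGraph G)) :
    ∀ y ∈ Q, y ≠ 1 → ∀ x ∈ P, x * y = y * x → x = 1 := by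
  intro y hyQ hy1 x hxP hxy
  by_contra hx1
  -- basic setup
  obtain ⟨m, hym⟩ : ∃ m : ℕ, y ^ q ^ m = 1 := by
    obtain ⟨k, hk⟩ := hQ ⟨y, hyQ⟩
    exact ⟨k, by simpa [Subtype.ext_iff] using hk⟩
  have hxp : x ^ p = 1 := hPel x hxP
  have hpqm : ¬ p ∣ q ^ m := by
    intro h
    exact hpq ((Nat.prime_dvd_prime_iff_eq hp hq).mp (hp.dvd_of_dvd_pow h))
  have hco : Nat.Coprime p (q ^ m) := (Nat.Prime.coprime_iff_not_dvd hp).mpr hpqm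
  have htriv : ∀ g : G, g ∈ P → g ∈ Q → g = 1 := by
    intro g h1 h2
    have : g ∈ P ⊓ Q := ⟨h1, h2⟩
    rw [hint] at this
    exact Subgroup.mem_bot.mp this
  have hPc : ∀ a, a ∈ P → ∀ b, b ∈ P → a * b = b * a := by
    intro a ha b hb
    have := hPab ⟨a, ha⟩ ⟨b, hb⟩
    exact Subtype.ext_iff.mp this
  -- a convenient form of claw-freeness
  have claw : ∀ (b a1 a2 a3 : G), b ≠ 1 → a1 ≠ 1 → a2 ≠ 1 → a3 ≠ 1 →
      a1 ≠ a2 → a1 ≠ a3 → a2 ≠ a3 →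
      PowAdj b a1 → PowAdj b a2 → PowAdj b a3 →
      ¬ PowAdj a1 a2 → ¬ PowAdj a1 a3 → ¬ PowAdj a2 a3 → False := by
    intro b a1 a2 a3 hb h1 h2 h3 h12 h13 h23 j1 j2 j3 n12 n13 n23
    exact hcf ⟨⟨b, hb⟩, ⟨a1, h1⟩, ⟨a2, h2⟩, ⟨a3, h3⟩,
      fun h => h12 (congrArg Subtype.val h),
      fun h => h13 (congrArg Subtype.val h),
      fun h => h23 (congrArg Subtype.val h),
      j1, j2, j3, n12, n13, n23⟩
  by_cases hcase1 : ∃ z ∈ P, z * y = y * z ∧ z ∉ Subgroup.zpowers x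
  · -- Case 1: centralizer of y in P is not contained in ⟨x⟩
    obtain ⟨z, hzP, hzy, hzx⟩ := hcase1
    have hz1 : z ≠ 1 := fun h => hzx (h ▸ one_mem _)
    have hzp : z ^ p = 1 := hPel z hzP
    have hxz : x * z = z * x := hPc x hxP z hzP
    have hxzP : x * z ∈ P := mul_mem hxP hzP
    have hxzp : (x * z) ^ p = 1 := hPel _ hxzP
    have hxz1 : x * z ≠ 1 := by
      intro h
      have : z = x⁻¹ := by rw [← inv_mul_cancel_left x z, h, mul_one]
      exact hzx (this ▸ inv_mem (Subgroup.mem_zpowers x))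
    have hxzy : (x * z) * y = y * (x * z) := by
      have h1 : Commute x y := hxy
      have h2 : Commute z y := hzy
      exact (h1.mul_left h2).symm.eq.symm ▸ (h1.mul_left h2).eq
    -- leaves are nonidentity
    have leaf1 : ∀ a, a ∈ P → a ≠ 1 → a * y ≠ 1 := by
      intro a haP ha1 h
      have : a = y⁻¹ := by rw [← mul_inv_cancel_right a y, h, one_mul]
      exact ha1 (htriv a haP (this ▸ inv_mem hyQ))
    -- adjacency of y with a*y
    have hadj : ∀ a, a ∈ P → a ≠ 1 → a * y = y * a → PowAdj y (a * y) := by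
      intro a haP ha1 hay
      refine ⟨fun h => ha1 ?_, Or.inl (s18_mem_zpowers_mul hay (hPel a haP) hym hco).2⟩
      have : a * y = 1 * y := by rw [one_mul, ← h]
      simpa using mul_right_cancel this
    -- splitting lemma: from a*y = b^n * y^n with a,b ∈ P, get a = b^n
    have hsplit : ∀ a b : G, a ∈ P → b ∈ P → ∀ n : ℤ, a * y = b ^ n * y ^ n → a = b ^ n := by
      intro a b haP hbP n h
      have key : (b ^ n)⁻¹ * a = y ^ (n - 1) := by
        have hys : y ^ (n - 1) = y ^ n * y⁻¹ := by rw [zpow_sub, zpow_one]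
        rw [hys]
        calc (b ^ n)⁻¹ * a = (b ^ n)⁻¹ * (a * y) * y⁻¹ := by group
          _ = (b ^ n)⁻¹ * (b ^ n * y ^ n) * y⁻¹ := by rw [h]
          _ = y ^ n * y⁻¹ := by group
      have hPmem : (b ^ n)⁻¹ * a ∈ P := mul_mem (inv_mem (zpow_mem hbP n)) haP
      have hQmem : (b ^ n)⁻¹ * a ∈ Q := key ▸ zpow_mem hyQ (n - 1)
      have h0 := htriv _ hPmem hQmem
      exact (inv_mul_eq_one.mp h0).symm
    -- reduction: membership in zpowers of (c*y) gives membership in zpowers of c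
    have hred : ∀ a c : G, a ∈ P → c ∈ P → c * y = y * c →
        a * y ∈ Subgroup.zpowers (c * y) → a ∈ Subgroup.zpowers c := by
      intro a c haP hcP hcy hmem
      obtain ⟨n, hn⟩ := Subgroup.mem_zpowers_iff.mp hmem
      have hC : Commute c y := hcy
      rw [hC.mul_zpow] at hn
      exact Subgroup.mem_zpowers_iff.mpr ⟨n, (hsplit a c haP hcP n hn.symm).symm⟩
    have hxzx : x * z ∉ Subgroup.zpowers x := by
      intro h
      have : z = x⁻¹ * (x * z) := by group
      exact hzx (this ▸ mul_mem (inv_mem (Subgroup.mem_zpowers x)) h)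
    have hxnz : x ∉ Subgroup.zpowers z := fun h => hzx (s18_zpowers_symm hp hxp hzp hx1 h)
    refine claw y (x * y) (z * y) ((x * z) * y) hy1
      (leaf1 x hxP hx1) (leaf1 z hzP hz1) (leaf1 _ hxzP hxz1)
      ?_ ?_ ?_ (hadj x hxP hx1 hxy) (hadj z hzP hz1 hzy) (hadj _ hxzP hxz1 hxzy) ?_ ?_ ?_
    · intro h
      exact hzx (mul_right_cancel h ▸ Subgroup.mem_zpowers x)
    · intro h
      exact hz1 (left_eq_mul.mp (mul_right_cancel h))
    · intro h
      exact hx1 (right_eq_mul.mp (mul_right_cancel h))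
    · rintro ⟨-, h | h⟩
      · exact hxnz (hred x z hxP hzP hzy h)
      · exact hzx (hred z x hzP hxP hxy h)
    · rintro ⟨-, h | h⟩
      · have h1 : x ∈ Subgroup.zpowers (x * z) := hred x (x * z) hxP hxzP hxzy h
        exact hxzx (s18_zpowers_symm hp hxp hxzp hx1 h1)
      · exact hxzx (hred (x * z) x hxzP hxP hxy h)
    · rintro ⟨-, h | h⟩
      · have h1 : z ∈ Subgroup.zpowers (x * z) := hred z (x * z) hzP hxzP hxzy h
        have h2 : x * z ∈ Subgroup.zpowers z := s18_zpowers_symm hp hzp hxzp hz1 h1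
        have h3 : x ∈ Subgroup.zpowers z := by
          have : x = (x * z) * z⁻¹ := by group
          exact this ▸ mul_mem h2 (inv_mem (Subgroup.mem_zpowers z))
        exact hxnz h3
      · have h1 : x * z ∈ Subgroup.zpowers z := hred (x * z) z hxzP hzP hzy h
        have h3 : x ∈ Subgroup.zpowers z := by
          have : x = (x * z) * z⁻¹ := by group
          exact this ▸ mul_mem h1 (inv_mem (Subgroup.mem_zpowers z))
        exact hxnz h3
  · push_neg at hcase1
    by_cases hcase2 : ∃ z ∈ P, ∃ w ∈ P, ¬(z * y = y * z) ∧ ¬(w * y = y * w) ∧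
        ¬((z⁻¹ * w) * y = y * (z⁻¹ * w))
    · -- Case 2
      obtain ⟨z, hzP, w, hwP, hzc, hwc, hzwc⟩ := hcase2
      have hcpow : ∀ a : G, (a * y * a⁻¹) ^ q ^ m = 1 := by
        intro a
        rw [conj_pow, hym, mul_one, mul_inv_cancel]
      have hcne : ∀ a : G, a * y * a⁻¹ ≠ 1 := by
        intro a h
        apply hy1
        have hy' : y = a⁻¹ * (a * y * a⁻¹) * a := by group
        rw [hy', h]; group
      have hccomm : ∀ a, a ∈ P → x * (a * y * a⁻¹) = (a * y * a⁻¹) * x := by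
        intro a haP
        have hxa : Commute x a := hPc x hxP a haP
        exact ((hxa.mul_right hxy).mul_right hxa.inv_right).eq
      have hcdiff : ∀ a, a ∈ P → ∀ b, b ∈ P →
          (a * y * a⁻¹) * (b * y * b⁻¹)⁻¹ ∈ P := by
        intro a haP b hbP
        have h1 : (a * y * a⁻¹) * (b * y * b⁻¹)⁻¹ = a * (y * (a⁻¹ * b) * y⁻¹) * b⁻¹ := by
          group
        rw [h1]
        exact mul_mem (mul_mem haP (hPn.conj_mem _ (mul_mem (inv_mem haP) hbP) y))
          (inv_mem hbP)
      have hcinj : ∀ a b : G, a * y * a⁻¹ = b * y * b⁻¹ →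
          (b⁻¹ * a) * y = y * (b⁻¹ * a) := by
        intro a b h
        have h1 : (b⁻¹ * a) * y * (b⁻¹ * a)⁻¹ = y := by
          have h0 : (b⁻¹ * a) * y * (b⁻¹ * a)⁻¹ = b⁻¹ * (a * y * a⁻¹) * b := by group
          rw [h0, h]; group
        calc (b⁻¹ * a) * y = ((b⁻¹ * a) * y * (b⁻¹ * a)⁻¹) * (b⁻¹ * a) := by group
          _ = y * (b⁻¹ * a) := by rw [h1]
      have hhalf : ∀ u v : G, u ^ q ^ m = 1 → v ^ q ^ m = 1 →
          x * u = u * x → x * v = v * x → u * v⁻¹ ∈ P →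
          x * u ∈ Subgroup.zpowers (x * v) → u = v := by
        intro u v hu hv hxu hxv hPd hmem
        obtain ⟨n, hn⟩ := Subgroup.mem_zpowers_iff.mp hmem
        have hC : Commute x v := hxv
        rw [hC.mul_zpow] at hn
        have h1 : u = x ^ (n - 1) * v ^ n := by
          have h0 : x⁻¹ * (x ^ n * v ^ n) = u := by rw [hn]; group
          rw [← h0, zpow_sub, zpow_one]; group
        have hcx : Commute (x ^ (n - 1)) (v ^ n) := (hC.zpow_left (n - 1)).zpow_right n
        have h2 : (x ^ (n - 1)) ^ q ^ m = 1 := by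
          have h2a := congrArg (fun g => g ^ q ^ m) h1
          rw [hu, hcx.mul_pow] at h2a
          have h2b : (v ^ n) ^ q ^ m = 1 := by
            rw [← zpow_natCast (v ^ n), ← zpow_mul, mul_comm, zpow_mul, zpow_natCast, hv,
              one_zpow]
          rw [h2b, mul_one] at h2a
          exact h2a.symm
        have h3 : x ^ ((n - 1) * (q ^ m : ℕ)) = 1 := by
          rw [zpow_mul, zpow_natCast]; exact h2
        have h4 : x ^ (n - 1) = 1 := s18_zpow_eq_one_of_mul hp hxp hpqm h3
        have h5 : u = v ^ n := by rw [h1, h4, one_mul]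
        have h6 : u * v⁻¹ = v ^ (n - 1) := by rw [h5, zpow_sub, zpow_one]
        have h7 : (v ^ (n - 1)) ^ p = 1 := hPel _ (h6 ▸ hPd)
        have h8 : (v ^ (n - 1)) ^ q ^ m = 1 := by
          rw [← zpow_natCast (v ^ (n - 1)), ← zpow_mul, mul_comm, zpow_mul, zpow_natCast, hv,
            one_zpow]
        have h9 : v ^ (n - 1) = 1 := s18_eq_one_of_coprime_pows hco h7 h8
        have h10 : v ^ n = v := by
          rw [show n = (n - 1) + 1 by ring, zpow_add, h9, one_mul, zpow_one]
        rw [h5, h10]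
      have h1P : (1 : G) ∈ P := one_mem P
      have hy12 : (1 : G) * y * 1⁻¹ ≠ z * y * z⁻¹ := by
        intro h
        apply hzc
        simpa using hcinj z 1 h.symm
      have hy13 : (1 : G) * y * 1⁻¹ ≠ w * y * w⁻¹ := by
        intro h
        apply hwc
        simpa using hcinj w 1 h.symm
      have hy23 : z * y * z⁻¹ ≠ w * y * w⁻¹ := by
        intro h
        apply hzwc
        have hC : Commute (w⁻¹ * z) y := hcinj z w h
        simpa [mul_inv_rev] using hC.inv_left.eq
      have hnadj : ∀ u v : G, u ^ q ^ m = 1 → v ^ q ^ m = 1 →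
          x * u = u * x → x * v = v * x → u * v⁻¹ ∈ P → v * u⁻¹ ∈ P → u ≠ v →
          ¬ PowAdj (x * u) (x * v) := by
        rintro u v hu hv hxu hxv hP1 hP2 huv ⟨-, h | h⟩
        · exact huv (hhalf u v hu hv hxu hxv hP1 h)
        · exact huv (hhalf v u hv hu hxv hxu hP2 h).symm
      have hleaf : ∀ u : G, u ^ q ^ m = 1 → u ≠ 1 → x * u ≠ 1 := by
        intro u hu hu1 h
        apply hx1
        have hxe : x = u⁻¹ := by rw [← mul_inv_cancel_right x u, h, one_mul]
        have hxq : x ^ q ^ m = 1 := by rw [hxe, inv_pow, hu, inv_one]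
        exact s18_eq_one_of_coprime_pows hco hxp hxq
      have hadjx : ∀ a, a ∈ P → PowAdj x (x * (a * y * a⁻¹)) := by
        intro a haP
        exact ⟨fun h => hcne a (left_eq_mul.mp h),
          Or.inl (s18_mem_zpowers_mul (hccomm a haP) hxp (hcpow a) hco).1⟩
      refine claw x (x * ((1 : G) * y * 1⁻¹)) (x * (z * y * z⁻¹)) (x * (w * y * w⁻¹)) hx1
        (hleaf _ (hcpow 1) (hcne 1)) (hleaf _ (hcpow z) (hcne z)) (hleaf _ (hcpow w) (hcne w))
        (fun h => hy12 (mul_left_cancel h)) (fun h => hy13 (mul_left_cancel h))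
        (fun h => hy23 (mul_left_cancel h))
        (hadjx 1 h1P) (hadjx z hzP) (hadjx w hwP)
        (hnadj _ _ (hcpow 1) (hcpow z) (hccomm 1 h1P) (hccomm z hzP)
          (hcdiff 1 h1P z hzP) (hcdiff z hzP 1 h1P) hy12)
        (hnadj _ _ (hcpow 1) (hcpow w) (hccomm 1 h1P) (hccomm w hwP)
          (hcdiff 1 h1P w hwP) (hcdiff w hwP 1 h1P) hy13)
        (hnadj _ _ (hcpow z) (hcpow w) (hccomm z hzP) (hccomm w hwP)
          (hcdiff z hzP w hwP) (hcdiff w hwP z hzP) hy23)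
    · -- Case 3
      push_neg at hcase2
      obtain ⟨z, hzP, hzc⟩ : ∃ z ∈ P, ¬(z * y = y * z) := by
        by_contra hall
        push_neg at hall
        apply hPnc
        refine ⟨⟨x, hxP⟩, fun a => ?_⟩
        obtain ⟨n, hn⟩ := Subgroup.mem_zpowers_iff.mp (hcase1 (a : G) a.2 (hall (a : G) a.2))
        exact Subgroup.mem_zpowers_iff.mpr ⟨n, Subtype.ext (by
          rw [SubgroupClass.coe_zpow]; exact hn)⟩
      have hwP : y * z * y⁻¹ ∈ P := hPn.conj_mem z hzP y
      have hwc : ¬((y * z * y⁻¹) * y = y * (y * z * y⁻¹)) := by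
        intro h
        apply hzc
        have h2 : y * z = y * (y * z * y⁻¹) := by rw [← h]; group
        have h1 : z = y * z * y⁻¹ := mul_left_cancel h2
        calc z * y = (y * z * y⁻¹) * y := by rw [← h1]
          _ = y * z := by group
      have hcm := hcase2 z hzP _ hwP hzc hwc
      obtain ⟨i, hi⟩ := Subgroup.mem_zpowers_iff.mp
        (hcase1 (z⁻¹ * (y * z * y⁻¹)) (mul_mem (inv_mem hzP) hwP) hcm)
      have hyzy : y * z * y⁻¹ = z * x ^ i := by rw [hi]; group
      have key : ∀ n : ℕ, y ^ n * z * (y ^ n)⁻¹ = z * x ^ (i * n) := by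
        intro n
        induction n with
        | zero => simp
        | succ k ih =>
          have hstep : y ^ (k + 1) * z * (y ^ (k + 1))⁻¹
              = y * (y ^ k * z * (y ^ k)⁻¹) * y⁻¹ := by
            rw [pow_succ']; group
          rw [hstep, ih]
          have hcomm : x ^ (i * k) * y⁻¹ = y⁻¹ * x ^ (i * k) := by
            have hC : Commute x y := hxy
            exact ((hC.zpow_left (i * k)).inv_right).eq
          calc y * (z * x ^ (i * (k : ℕ))) * y⁻¹
              = (y * z) * (x ^ (i * (k : ℕ)) * y⁻¹) := by group
            _ = (y * z) * (y⁻¹ * x ^ (i * (k : ℕ))) := by rw [hcomm]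
            _ = (y * z * y⁻¹) * x ^ (i * (k : ℕ)) := by group
            _ = z * x ^ i * x ^ (i * (k : ℕ)) := by rw [hyzy]
            _ = z * x ^ (i * ((k : ℕ) + 1 : ℕ)) := by
                rw [mul_assoc, ← zpow_add]
                congr 1
                push_cast
                ring
      have hfin := key (q ^ m)
      rw [hym] at hfin
      simp only [one_mul, inv_one, mul_one] at hfin
      have hx0 : x ^ (i * ((q ^ m : ℕ) : ℤ)) = 1 := left_eq_mul.mp hfin
      have hxi : x ^ i = 1 := s18_zpow_eq_one_of_mul hp hxp hpqm hx0
      apply hzc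
      have hz' : y * z * y⁻¹ = z := by rw [hyzy, hxi, mul_one]
      calc z * y = (y * z * y⁻¹) * y := by rw [hz']
        _ = y * z := by group
end

section
/- Let G be a finite group whose order has at least 3 distinct prime divisors. If the reduced power graph P*(G) is claw-free, then the center of G is trivial. -/
set_option maxHeartbeats 1000000


section Aux
variable {G : Type*} [Group G]

private lemma aux_mem_zpowers_pow (a : G) {n : ℕ} (h : Nat.Coprime n (orderOf a))
    (h1 : 1 < orderOf a) : a ∈ Subgroup.zpowers (a ^ n) := by
  obtain ⟨m, -, hm⟩ := Nat.exists_mul_mod_eq_one_of_coprime h h1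
  refine Subgroup.mem_zpowers_iff.mpr ⟨(m : ℤ), ?_⟩
  rw [zpow_natCast, ← pow_mul, ← pow_mod_orderOf, hm, pow_one]

private lemma ne_one_of_orderOf {a : G} {n : ℕ} (h : orderOf a = n) (hn : n ≠ 1) : a ≠ 1 :=
  fun ha => hn (by rw [← h, ha, orderOf_one])

private lemma mem_zpowers_mul {w c : G} {n : ℕ} (h : Commute w c)
    (h1 : 1 < orderOf w) (hco : Nat.Coprime n (orderOf w)) (hc : c ^ n = 1) :
    w ∈ Subgroup.zpowers (w * c) := by
  have h1' : (w * c) ^ n = w ^ n := by rw [h.mul_pow, hc, mul_one]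
  have h2 : w ∈ Subgroup.zpowers (w ^ n) := aux_mem_zpowers_pow w hco h1
  rw [← h1'] at h2
  exact Subgroup.zpowers_le.mpr (pow_mem (Subgroup.mem_zpowers _) n) h2

private lemma not_mem_zpowers_of_not_dvd {a b : G} (h : ¬ orderOf a ∣ orderOf b) :
    a ∉ Subgroup.zpowers b := fun hm => h (orderOf_dvd_of_mem_zpowers hm)

private lemma aux_not_mem {w x u : G} {p : ℕ}
    (hwx : Commute w x) (hwu : Commute w u)
    (hw : orderOf w = p)
    (hu1 : 1 < orderOf u) (hco : Nat.Coprime p (orderOf u))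
    (hux : u ∉ Subgroup.zpowers x) :
    w * u ∉ Subgroup.zpowers (w * x) := by
  intro hmem
  obtain ⟨k, hk⟩ := Subgroup.mem_zpowers_iff.mp hmem
  apply hux
  have hwp1 : w ^ p = 1 := by rw [← hw]; exact pow_orderOf_eq_one w
  have h1 : (w * u) ^ p = u ^ p := by rw [hwu.mul_pow, hwp1, one_mul]
  have h2 : (w * x) ^ p = x ^ p := by rw [hwx.mul_pow, hwp1, one_mul]
  have h3 : u ^ p = (x ^ p) ^ k := by
    have e : ((w * x) ^ k) ^ p = ((w * x) ^ p) ^ k := by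
      rw [← zpow_natCast ((w * x) ^ k), ← zpow_mul, mul_comm, zpow_mul, zpow_natCast]
    calc u ^ p = (w * u) ^ p := h1.symm
      _ = ((w * x) ^ k) ^ p := by rw [hk]
      _ = ((w * x) ^ p) ^ k := e
      _ = (x ^ p) ^ k := by rw [h2]
  have h4 : u ^ p ∈ Subgroup.zpowers x :=
    h3 ▸ zpow_mem (pow_mem (Subgroup.mem_zpowers x) p) k
  have h5 : u ∈ Subgroup.zpowers (u ^ p) := aux_mem_zpowers_pow u hco hu1
  exact Subgroup.zpowers_le.mpr h4 h5

private lemma aux_not_dvd {p s t : ℕ} (hp : p.Prime) (hs : s.Prime) (ht : t.Prime)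
    (hst : s ≠ t) : ¬ (p * s ∣ p * t) := fun h =>
  hst ((Nat.prime_dvd_prime_iff_eq hs ht).mp ((Nat.mul_dvd_mul_iff_left hp.pos).mp h))

end Aux

open scoped commutatorElement

theorem stmt_19 {G : Type*} [Group G] [Finite G]
    (hπ : 3 ≤ (Nat.card G).primeFactors.card)
    (hcf : IsClawFree (reducedPowerGraph G)) :
    Subgroup.center G = ⊥ := by
  rw [Subgroup.eq_bot_iff_forall]
  intro z hz
  by_contra hz1
  have hcard0 : Nat.card G ≠ 0 := Nat.card_pos.ne'
  have hzo : orderOf z ≠ 1 := fun h => hz1 (orderOf_eq_one_iff.mp h)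
  obtain ⟨p, hp, hpz⟩ := Nat.exists_prime_and_dvd hzo
  have hzo0 : orderOf z ≠ 0 := (orderOf_pos z).ne'
  set w : G := z ^ (orderOf z / p) with hwdef
  have hwo : orderOf w = p := orderOf_pow_orderOf_div hzo0 hpz
  have hwc : ∀ g : G, Commute w g := fun g =>
    ((Subgroup.mem_center_iff.mp (Subgroup.pow_mem _ hz _)) g).symm
  have hw1 : w ≠ 1 := ne_one_of_orderOf hwo hp.ne_one
  have hpmem : p ∈ (Nat.card G).primeFactors :=
    Nat.mem_primeFactors.mpr ⟨hp, hpz.trans (orderOf_dvd_natCard z), hcard0⟩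
  have h2 : 1 < ((Nat.card G).primeFactors.erase p).card := by
    have := Finset.card_erase_of_mem hpmem
    omega
  obtain ⟨q, hqmem, r, hrmem, hqr⟩ := Finset.one_lt_card.mp h2
  obtain ⟨hqp, hqmem'⟩ := Finset.mem_erase.mp hqmem
  obtain ⟨hrp, hrmem'⟩ := Finset.mem_erase.mp hrmem
  have hq : q.Prime := Nat.prime_of_mem_primeFactors hqmem'
  have hr : r.Prime := Nat.prime_of_mem_primeFactors hrmem'
  haveI := Fact.mk hq
  haveI := Fact.mk hr
  obtain ⟨x, hx⟩ := exists_prime_orderOf_dvd_card' q (Nat.dvd_of_mem_primeFactors hqmem')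
  obtain ⟨y, hy⟩ := exists_prime_orderOf_dvd_card' r (Nat.dvd_of_mem_primeFactors hrmem')
  have cpq : Nat.Coprime p q := (Nat.coprime_primes hp hq).mpr (Ne.symm hqp)
  have cpr : Nat.Coprime p r := (Nat.coprime_primes hp hr).mpr (Ne.symm hrp)
  have cqr : Nat.Coprime q r := (Nat.coprime_primes hq hr).mpr hqr
  -- Step 1: uniqueness of subgroups of prime order s ≠ p
  have uniq : ∀ (s t : ℕ) (a b : G), s.Prime → t.Prime → s ≠ p → t ≠ p → s ≠ t →
      orderOf a = s → orderOf b = t → ∀ u : G, orderOf u = s → u ∈ Subgroup.zpowers a := by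
    intro s t a b hs ht hsp htp hst ha hb u hu
    by_contra hua
    have hau : a ∉ Subgroup.zpowers u := by
      intro h
      have hle : Subgroup.zpowers a ≤ Subgroup.zpowers u := Subgroup.zpowers_le.mpr h
      have heq : Subgroup.zpowers a = Subgroup.zpowers u :=
        Subgroup.eq_of_le_of_card_ge hle
          (le_of_eq (by rw [Nat.card_zpowers, Nat.card_zpowers, ha, hu]))
      exact hua (heq ▸ Subgroup.mem_zpowers u)
    have csp : Nat.Coprime p s := (Nat.coprime_primes hp hs).mpr (Ne.symm hsp)
    have ctp : Nat.Coprime p t := (Nat.coprime_primes hp ht).mpr (Ne.symm htp)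
    have hoa : orderOf (w * a) = p * s := by
      have h0 := (hwc a).orderOf_mul_eq_mul_orderOf_of_coprime (x := w) (y := a)
        (by rw [hwo, ha]; exact csp)
      rwa [hwo, ha] at h0
    have hou : orderOf (w * u) = p * s := by
      have h0 := (hwc u).orderOf_mul_eq_mul_orderOf_of_coprime (x := w) (y := u)
        (by rw [hwo, hu]; exact csp)
      rwa [hwo, hu] at h0
    have hob : orderOf (w * b) = p * t := by
      have h0 := (hwc b).orderOf_mul_eq_mul_orderOf_of_coprime (x := w) (y := b)
        (by rw [hwo, hb]; exact ctp)
      rwa [hwo, hb] at h0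
    have ha1 : a ≠ 1 := ne_one_of_orderOf ha hs.ne_one
    have hu1 : u ≠ 1 := ne_one_of_orderOf hu hs.ne_one
    have hb1 : b ≠ 1 := ne_one_of_orderOf hb ht.ne_one
    have hps1 : p * s ≠ 1 := by
      have := hp.two_le; have := hs.two_le; intro h; nlinarith
    have hpt1 : p * t ≠ 1 := by
      have := hp.two_le; have := ht.two_le; intro h; nlinarith
    have hau_ne : a ≠ u := fun h => hua (h ▸ Subgroup.mem_zpowers a)
    have hab_ne : a ≠ b := fun h => hst (by rw [← ha, h, hb])
    have hub_ne : u ≠ b := fun h => hst (by rw [← hu, h, hb])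
    -- adjacency of w with w * v for v of order coprime to p
    have adjw : ∀ v : G, orderOf v = s ∨ orderOf v = t → w ∈ Subgroup.zpowers (w * v) := by
      rintro v (hv | hv)
      · exact mem_zpowers_mul (hwc v) (by rw [hwo]; exact hp.one_lt)
          (by rw [hwo]; exact csp.symm) (by rw [← hv]; exact pow_orderOf_eq_one v)
      · exact mem_zpowers_mul (hwc v) (by rw [hwo]; exact hp.one_lt)
          (by rw [hwo]; exact ctp.symm) (by rw [← hv]; exact pow_orderOf_eq_one v)
    apply hcf
    refine ⟨⟨w, hw1⟩, ⟨w * a, ne_one_of_orderOf hoa hps1⟩,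
      ⟨w * u, ne_one_of_orderOf hou hps1⟩, ⟨w * b, ne_one_of_orderOf hob hpt1⟩,
      ?_, ?_, ?_, ?_, ?_, ?_, ?_, ?_, ?_⟩
    · exact fun h => hau_ne (mul_left_cancel (congrArg Subtype.val h))
    · exact fun h => hab_ne (mul_left_cancel (congrArg Subtype.val h))
    · exact fun h => hub_ne (mul_left_cancel (congrArg Subtype.val h))
    · exact ⟨fun h => ha1 (left_eq_mul.mp h),
        Or.inl (adjw a (Or.inl ha))⟩
    · exact ⟨fun h => hu1 (left_eq_mul.mp h),
        Or.inl (adjw u (Or.inl hu))⟩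
    · exact ⟨fun h => hb1 (left_eq_mul.mp h),
        Or.inl (adjw b (Or.inr hb))⟩
    · rintro ⟨-, h | h⟩
      · exact aux_not_mem (hwc u) (hwc a) hwo (by rw [ha]; exact hs.one_lt)
          (by rw [ha]; exact csp) hau h
      · exact aux_not_mem (hwc a) (hwc u) hwo (by rw [hu]; exact hs.one_lt)
          (by rw [hu]; exact csp) hua h
    · rintro ⟨-, h | h⟩
      · exact not_mem_zpowers_of_not_dvd
          (by rw [hoa, hob]; exact aux_not_dvd hp hs ht hst) h
      · exact not_mem_zpowers_of_not_dvd
          (by rw [hoa, hob]; exact aux_not_dvd hp ht hs (Ne.symm hst)) h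
    · rintro ⟨-, h | h⟩
      · exact not_mem_zpowers_of_not_dvd
          (by rw [hou, hob]; exact aux_not_dvd hp hs ht hst) h
      · exact not_mem_zpowers_of_not_dvd
          (by rw [hou, hob]; exact aux_not_dvd hp ht hs (Ne.symm hst)) h
  have hqx : ∀ u : G, orderOf u = q → u ∈ Subgroup.zpowers x :=
    uniq q r x y hq hr hqp hrp hqr hx hy
  have hry : ∀ u : G, orderOf u = r → u ∈ Subgroup.zpowers y :=
    uniq r q y x hr hq hrp hqp (Ne.symm hqr) hy hx
  -- Step 2: x and y commute
  have hsc1 : SemiconjBy y x (y * x * y⁻¹) := by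
    unfold SemiconjBy
    group
  have hsc2 : SemiconjBy x y (x * y * x⁻¹) := by
    unfold SemiconjBy
    group
  have e1 : orderOf (y * x * y⁻¹) = q := (SemiconjBy.orderOf_eq y hsc1).symm.trans hx
  have e2 : orderOf (x * y * x⁻¹) = r := (SemiconjBy.orderOf_eq x hsc2).symm.trans hy
  obtain ⟨k, hk⟩ := Subgroup.mem_zpowers_iff.mp (hqx _ e1)
  obtain ⟨m, hm⟩ := Subgroup.mem_zpowers_iff.mp (hry _ e2)
  have hcomm : Commute x y := by
    rw [← commutatorElement_eq_one_iff_commute]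
    have c1 : ⁅x, y⁆ ∈ Subgroup.zpowers y := by
      have : ⁅x, y⁆ = (y ^ m) * y⁻¹ := by rw [hm, commutatorElement_def]
      rw [this]
      exact mul_mem (zpow_mem (Subgroup.mem_zpowers y) m) (inv_mem (Subgroup.mem_zpowers y))
    have c2 : ⁅x, y⁆ ∈ Subgroup.zpowers x := by
      have : ⁅x, y⁆ = x * ((x ^ k)⁻¹) := by rw [hk, commutatorElement_def]; group
      rw [this]
      exact mul_mem (Subgroup.mem_zpowers x) (inv_mem (zpow_mem (Subgroup.mem_zpowers x) k))
    have d1 : orderOf ⁅x, y⁆ ∣ q := hx ▸ orderOf_dvd_of_mem_zpowers c2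
    have d2 : orderOf ⁅x, y⁆ ∣ r := hy ▸ orderOf_dvd_of_mem_zpowers c1
    have hgcd : Nat.gcd q r = 1 := cqr
    have : orderOf ⁅x, y⁆ = 1 := Nat.eq_one_of_dvd_one (hgcd ▸ Nat.dvd_gcd d1 d2)
    exact orderOf_eq_one_iff.mp this
  -- Step 3: the element w * (x * y) of order p*q*r gives a claw with leaves x, y, w
  have hwp1 : w ^ p = 1 := by rw [← hwo]; exact pow_orderOf_eq_one w
  have hxq1 : x ^ q = 1 := by rw [← hx]; exact pow_orderOf_eq_one x
  have hyr1 : y ^ r = 1 := by rw [← hy]; exact pow_orderOf_eq_one y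
  set g : G := w * (x * y) with hgdef
  have hoxy : orderOf (x * y) = q * r := by
    have h0 := hcomm.orderOf_mul_eq_mul_orderOf_of_coprime (by rw [hx, hy]; exact cqr)
    rwa [hx, hy] at h0
  have hog : orderOf g = p * (q * r) := by
    rw [hgdef]
    have h0 := (hwc (x * y)).orderOf_mul_eq_mul_orderOf_of_coprime (x := w) (y := x * y)
      (by rw [hwo, hoxy]; exact cpq.mul_right cpr)
    rwa [hwo, hoxy] at h0
  have hp2 := hp.two_le
  have hq2 := hq.two_le
  have hr2 := hr.two_le
  have hg1 : g ≠ 1 := ne_one_of_orderOf hog (by nlinarith)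
  have hx1 : x ≠ 1 := ne_one_of_orderOf hx hq.ne_one
  have hy1 : y ≠ 1 := ne_one_of_orderOf hy hr.ne_one
  -- memberships
  have hwg : w ∈ Subgroup.zpowers g := by
    rw [hgdef]
    refine mem_zpowers_mul (hwc (x * y)) (by rw [hwo]; exact hp.one_lt)
      (by rw [hwo]; exact Nat.Coprime.mul cpq.symm cpr.symm) ?_
    rw [← hoxy]; exact pow_orderOf_eq_one (x * y)
  have hxg : x ∈ Subgroup.zpowers g := by
    have hge : g = x * (w * y) := by
      rw [hgdef, ← mul_assoc, (hwc x).eq, mul_assoc]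
    have hc : (w * y) ^ (p * r) = 1 := by
      rw [(hwc y).mul_pow, pow_mul, hwp1, one_pow, pow_mul', hyr1, one_pow, one_mul]
    have := mem_zpowers_mul ((hwc x).symm.mul_right hcomm) (by rw [hx]; exact hq.one_lt)
      (by rw [hx]; exact Nat.Coprime.mul cpq cqr.symm) hc
    rwa [← hge] at this
  have hyg : y ∈ Subgroup.zpowers g := by
    have hge : g = y * (w * x) := by
      rw [hgdef, hcomm.eq, ← mul_assoc, (hwc y).eq, mul_assoc]
    have hc : (w * x) ^ (p * q) = 1 := by
      rw [(hwc x).mul_pow, pow_mul, hwp1, one_pow, pow_mul', hxq1, one_pow, one_mul]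
    have := mem_zpowers_mul ((hwc y).symm.mul_right hcomm.symm) (by rw [hy]; exact hr.one_lt)
      (by rw [hy]; exact Nat.Coprime.mul cpr cqr) hc
    rwa [← hge] at this
  -- non-adjacency facts
  have nxy : x ∉ Subgroup.zpowers y := not_mem_zpowers_of_not_dvd
    (by rw [hx, hy]; exact fun h => hqr ((Nat.prime_dvd_prime_iff_eq hq hr).mp h))
  have nyx : y ∉ Subgroup.zpowers x := not_mem_zpowers_of_not_dvd
    (by rw [hx, hy]; exact fun h => hqr (((Nat.prime_dvd_prime_iff_eq hr hq).mp h).symm))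
  have nxw : x ∉ Subgroup.zpowers w := not_mem_zpowers_of_not_dvd
    (by rw [hx, hwo]; exact fun h => hqp ((Nat.prime_dvd_prime_iff_eq hq hp).mp h))
  have nwx : w ∉ Subgroup.zpowers x := not_mem_zpowers_of_not_dvd
    (by rw [hx, hwo]; exact fun h => hqp (((Nat.prime_dvd_prime_iff_eq hp hq).mp h).symm))
  have nyw : y ∉ Subgroup.zpowers w := not_mem_zpowers_of_not_dvd
    (by rw [hy, hwo]; exact fun h => hrp ((Nat.prime_dvd_prime_iff_eq hr hp).mp h))
  have nwy : w ∉ Subgroup.zpowers y := not_mem_zpowers_of_not_dvd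
    (by rw [hy, hwo]; exact fun h => hrp (((Nat.prime_dvd_prime_iff_eq hp hr).mp h).symm))
  -- distinctness
  have dxy : x ≠ y := fun h => hqr (by rw [← hx, h, hy])
  have dxw : x ≠ w := fun h => hqp (by rw [← hx, h, hwo])
  have dyw : y ≠ w := fun h => hrp (by rw [← hy, h, hwo])
  have dgx : g ≠ x := fun h => by
    have : p * (q * r) = q := by rw [← hog, h, hx]
    nlinarith
  have dgy : g ≠ y := fun h => by
    have : p * (q * r) = r := by rw [← hog, h, hy]
    nlinarith
  have dgw : g ≠ w := fun h => by
    have h0 : p * (q * r) = p * 1 := by rw [← hog, h, hwo, mul_one]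
    have h1 : q * r = 1 := Nat.eq_of_mul_eq_mul_left hp.pos h0
    nlinarith
  apply hcf
  refine ⟨⟨g, hg1⟩, ⟨x, hx1⟩, ⟨y, hy1⟩, ⟨w, hw1⟩, ?_, ?_, ?_, ?_, ?_, ?_, ?_, ?_, ?_⟩
  · exact fun h => dxy (congrArg Subtype.val h)
  · exact fun h => dxw (congrArg Subtype.val h)
  · exact fun h => dyw (congrArg Subtype.val h)
  · exact ⟨dgx, Or.inr hxg⟩
  · exact ⟨dgy, Or.inr hyg⟩
  · exact ⟨dgw, Or.inr hwg⟩
  · rintro ⟨-, h | h⟩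
    · exact nxy h
    · exact nyx h
  · rintro ⟨-, h | h⟩
    · exact nxw h
    · exact nwx h
  · rintro ⟨-, h | h⟩
    · exact nyw h
    · exact nwy h
end
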